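/- arXiv:1711.08390 — 8 statements merged into one kernel-verified Lean document; each statement's English description precedes it below -/
import Mathlib

section
/- Let k ≥ 1 and let Z be a multiset of 2k complex numbers consisting of k conjugate pairs {z_1, z̄_1, ..., z_k, z̄_k} with Re(z_i) ≥ 0 for all i. Then for every j with 1 ≤ j ≤ 2k, the j-th elementary symmetric function e_j(Z) = ∑_{J ⊆ Z, |J| = j} ∏_{z ∈ J} z is a real number and is nonnegative. -/
/-!
Vieta's formula identifies `e_j(Z)` with a coefficient of `∏_{w ∈ Z} (X + w)`, and pairing each
`z` with `z̄` writes this product as `∏ᵢ (X² + 2 Re(zᵢ) X + |zᵢ|²)`, a product of polynomials whose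
coefficients are nonnegative reals. Nonnegativity is expressed through the partial order on `ℂ`
in which `0 ≤ w` means that `w` is a nonnegative real number.
-/

open Polynomial ComplexOrder ComplexConjugate

namespace Polynomial

variable {R : Type*} [Semiring R] [PartialOrder R] [IsOrderedRing R]

theorem coeff_mul_nonneg {p q : R[X]} (hp : ∀ n, 0 ≤ p.coeff n) (hq : ∀ n, 0 ≤ q.coeff n)
    (n : ℕ) : 0 ≤ (p * q).coeff n := by
  rw [coeff_mul]
  exact Finset.sum_nonneg fun x _ => mul_nonneg (hp _) (hq _)

end Polynomial

namespace Multiset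

section OrderedSemiring

variable {R : Type*} [CommSemiring R] [PartialOrder R] [IsOrderedRing R]

theorem coeff_prod_map_X_add_C_sum_nonneg {ι : Type*} (s : Finset ι) (t : ι → Multiset R)
    (ht : ∀ i ∈ s, ∀ n, 0 ≤ ((t i).map fun r => X + C r).prod.coeff n) (n : ℕ) :
    0 ≤ ((∑ i ∈ s, t i).map fun r => X + C r).prod.coeff n :=
  Finset.sum_induction t (fun u => ∀ n, 0 ≤ (u.map fun r => X + C r).prod.coeff n)
    (fun u v hu hv => by simpa only [map_add, prod_add] using coeff_mul_nonneg hu hv)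
    (fun n => by
      rw [map_zero, prod_zero, coeff_one]
      split_ifs <;> simp) ht n

end OrderedSemiring

theorem esymm_nonneg_of_coeff_prod_X_add_C_nonneg {R : Type*} [CommSemiring R] [Preorder R]
    (s : Multiset R) (h : ∀ n, 0 ≤ (s.map fun r => X + C r).prod.coeff n) (j : ℕ) :
    0 ≤ s.esymm j := by
  rcases le_or_gt j (card s) with hj | hj
  · rw [← Nat.sub_sub_self hj, ← prod_X_add_C_coeff s (Nat.sub_le _ _)]
    exact h _
  · simp [esymm, powersetCard_eq_empty _ hj]

end Multiset

namespace Complex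

theorem coeff_prod_X_add_C_pair_conj_nonneg {z : ℂ} (hz : 0 ≤ z.re) (n : ℕ) :
    0 ≤ (({z, conj z} : Multiset ℂ).map fun r => X + C r).prod.coeff n := by
  have hquad : (({z, conj z} : Multiset ℂ).map fun r => X + C r).prod =
      X ^ 2 + C ((2 * z.re : ℝ) : ℂ) * X + C ((normSq z : ℝ) : ℂ) := by
    rw [← add_conj, ← mul_conj, C_add, C_mul]
    simp only [Multiset.insert_eq_cons, Multiset.map_cons, Multiset.map_singleton,
      Multiset.prod_cons, Multiset.prod_singleton]
    ring
  rw [hquad]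
  rcases n with _ | _ | _ | n <;> simp [coeff_X, coeff_C, normSq_nonneg]
  exact mul_nonneg zero_le_two (zero_le_real.mpr hz)

end Complex

theorem stmt0_general (k : ℕ) (z : Fin k → ℂ)
    (hre : ∀ i, 0 ≤ (z i).re)
    (Z : Multiset ℂ)
    (hZ : Z = ∑ i : Fin k, ({z i, (starRingEnd ℂ) (z i)} : Multiset ℂ)) :
    ∀ j : ℕ, 1 ≤ j → j ≤ 2 * k →
      ∃ r : ℝ, 0 ≤ r ∧ Z.esymm j = (r : ℂ) := by
  intro j _ _
  have hcoeff : ∀ n, 0 ≤ (Z.map fun r => X + C r).prod.coeff n :=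
    hZ ▸ Multiset.coeff_prod_map_X_add_C_sum_nonneg _ _
      fun i _ => Complex.coeff_prod_X_add_C_pair_conj_nonneg (hre i)
  obtain ⟨r, hr, hrZ⟩ := RCLike.nonneg_iff_exists_ofReal.mp
    (Z.esymm_nonneg_of_coeff_prod_X_add_C_nonneg hcoeff j)
  exact ⟨r, hr, hrZ.symm⟩

/-- Let `k ≥ 1` and let `Z` be the multiset of `2k` complex numbers
consisting of the conjugate pairs `{z i, conj (z i)}` for `i : Fin k`, where each `z i`
has nonnegative real part. Then for every `1 ≤ j ≤ 2k` the `j`-th elementary symmetric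
function of `Z` is a (nonnegative) real number. -/
theorem stmt0 (k : ℕ) (hk : 1 ≤ k) (z : Fin k → ℂ)
    (hre : ∀ i, 0 ≤ (z i).re)
    (Z : Multiset ℂ)
    (hZ : Z = ∑ i : Fin k, ({z i, (starRingEnd ℂ) (z i)} : Multiset ℂ)) :
    ∀ j : ℕ, 1 ≤ j → j ≤ 2 * k →
      ∃ r : ℝ, 0 ≤ r ∧ Z.esymm j = (r : ℂ) :=
  stmt0_general k z hre Z hZ
end

section
/- Let f be a monic real polynomial of degree n ≥ 2 all of whose complex roots have nonnegative real part, let r be a real root of f, and let g be the (monic, real, degree n−1) quotient polynomial with f(x) = (x − r) g(x). Then the coefficients of g alternate in sign: for every 0 ≤ j ≤ n−1, the number (−1)^{n−1−j} · (coefficient of x^j in g) is nonnegative. -/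
/-!
Over `ℝ`, a complex root `z` of `f` splits off either the linear factor `X - z` (if `z` is real)
or the quadratic factor `X² - 2 Re z · X + |z|²`; when `Re z ≥ 0` both have coefficients of
alternating sign, and this sign pattern is preserved by products. So a monic real polynomial with
all roots in the closed right half-plane has alternating coefficients, and `g` is such a
polynomial since its roots are roots of `f`.
-/

open Polynomial

namespace Polynomial

def HasAltSignCoeffs (p : ℝ[X]) : Prop :=
  ∀ j, 0 ≤ (-1 : ℝ) ^ (p.natDegree - j) * p.coeff j

theorem HasAltSignCoeffs.mul {p q : ℝ[X]} (hp : p.HasAltSignCoeffs) (hq : q.HasAltSignCoeffs) :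
    (p * q).HasAltSignCoeffs := by
  rcases eq_or_ne p 0 with rfl | hp0
  · simpa using hp
  rcases eq_or_ne q 0 with rfl | hq0
  · simpa using hq
  intro j
  rw [natDegree_mul hp0 hq0, coeff_mul, Finset.mul_sum]
  refine Finset.sum_nonneg fun ⟨a, b⟩ hab => ?_
  rw [Finset.HasAntidiagonal.mem_antidiagonal] at hab
  rcases le_or_gt a p.natDegree with ha | ha
  · rcases le_or_gt b q.natDegree with hb | hb
    · rw [show p.natDegree + q.natDegree - j = (p.natDegree - a) + (q.natDegree - b) by omega,
        pow_add, mul_mul_mul_comm]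
      exact mul_nonneg (hp a) (hq b)
    · simp [coeff_eq_zero_of_natDegree_lt hb]
  · simp [coeff_eq_zero_of_natDegree_lt ha]

theorem hasAltSignCoeffs_X_sub_C {a : ℝ} (ha : 0 ≤ a) : (X - C a).HasAltSignCoeffs := by
  intro j
  rw [natDegree_X_sub_C]
  rcases j with _ | _ | j <;> simp [coeff_X, coeff_C, ha]

theorem hasAltSignCoeffs_quadratic {b c : ℝ} (hb : 0 ≤ b) (hc : 0 ≤ c) :
    (X ^ 2 - C b * X + C c).HasAltSignCoeffs := by
  intro j
  have hdeg : (X ^ 2 - C b * X + C c).natDegree = 2 := by compute_degree!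
  rw [hdeg]
  rcases j with _ | _ | _ | j <;> simp [coeff_X, coeff_C, coeff_X_pow, hb, hc]

theorem exists_monic_dvd_hasAltSignCoeffs {p : ℝ[X]} {z : ℂ} (hz : aeval z p = 0)
    (hre : 0 ≤ z.re) : ∃ q : ℝ[X], q.Monic ∧ 0 < q.natDegree ∧ q ∣ p ∧ q.HasAltSignCoeffs := by
  by_cases him : z.im = 0
  · have hroot : p.IsRoot z.re := by
      have hzre : (z.re : ℂ) = z := Complex.ext rfl him.symm
      rw [← hzre] at hz
      have heval : ((p.eval z.re : ℝ) : ℂ) = 0 := (ofReal_eval (K := ℂ) p z.re).trans hz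
      exact_mod_cast heval
    exact ⟨X - C z.re, monic_X_sub_C _, by simp, dvd_iff_isRoot.mpr hroot,
      hasAltSignCoeffs_X_sub_C hre⟩
  · have hdeg : (X ^ 2 - C (2 * z.re) * X + C (‖z‖ ^ 2)).natDegree = 2 := by compute_degree!
    exact ⟨_, by monicity!, by rw [hdeg]; norm_num,
      quadratic_dvd_of_aeval_eq_zero_im_ne_zero p hz him,
      hasAltSignCoeffs_quadratic (by positivity) (by positivity)⟩

theorem Monic.hasAltSignCoeffs {p : ℝ[X]} (hp : p.Monic)
    (hroots : ∀ z : ℂ, aeval z p = 0 → 0 ≤ z.re) : p.HasAltSignCoeffs := by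
  induction h : p.natDegree using Nat.strong_induction_on generalizing p with
  | _ d ih =>
  rcases Nat.eq_zero_or_pos d with rfl | hd
  · rw [hp.natDegree_eq_zero.mp h]
    intro j
    rcases j with _ | j <;> simp [coeff_one]
  obtain ⟨z, hz⟩ := IsAlgClosed.exists_aeval_eq_zero ℂ p (by
    rw [degree_eq_natDegree hp.ne_zero, h]; exact_mod_cast hd.ne')
  obtain ⟨q, hq, hqdeg, ⟨s, rfl⟩, hqsign⟩ := exists_monic_dvd_hasAltSignCoeffs hz (hroots z hz)
  have hs : s.Monic := hq.of_mul_monic_left hp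
  refine hqsign.mul (ih s.natDegree ?_ hs (fun w hw => hroots w ?_) rfl)
  · rw [← h, hq.natDegree_mul hs]
    omega
  · exact aeval_eq_zero_of_dvd_aeval_eq_zero (dvd_mul_left s q) hw

end Polynomial

theorem stmt3_general (f g : Polynomial ℝ) (n : ℕ)
    (hmonic : f.Monic) (hdeg : f.natDegree = n)
    (hroots : ∀ z : ℂ, (Polynomial.aeval z) f = 0 → 0 ≤ z.re)
    (r : ℝ)
    (hfg : f = (Polynomial.X - Polynomial.C r) * g) :
    ∀ j : ℕ, j ≤ n - 1 → 0 ≤ (-1 : ℝ) ^ (n - 1 - j) * g.coeff j := by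
  subst hfg
  have hg : g.Monic := (monic_X_sub_C r).of_mul_monic_left hmonic
  have hgdeg : g.natDegree = n - 1 := by
    rw [← hdeg, (monic_X_sub_C r).natDegree_mul hg, natDegree_X_sub_C]
    omega
  intro j _
  rw [← hgdeg]
  exact hg.hasAltSignCoeffs
    (fun z hz => hroots z (aeval_eq_zero_of_dvd_aeval_eq_zero (dvd_mul_left g _) hz)) j

/-- Let `f` be a monic real polynomial of degree `n ≥ 2` all of whose
complex roots have nonnegative real part, let `r` be a real root of `f`, and let `g` be
the quotient polynomial with `f = (X - r) * g`. Then the coefficients of `g` alternate in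
sign: for every `0 ≤ j ≤ n - 1`, the number `(-1)^(n-1-j) * (coefficient of x^j in g)`
is nonnegative. -/
theorem stmt3 (f g : Polynomial ℝ) (n : ℕ) (hn : 2 ≤ n)
    (hmonic : f.Monic) (hdeg : f.natDegree = n)
    (hroots : ∀ z : ℂ, (Polynomial.aeval z) f = 0 → 0 ≤ z.re)
    (r : ℝ) (hr : f.IsRoot r)
    (hfg : f = (Polynomial.X - Polynomial.C r) * g) :
    ∀ j : ℕ, j ≤ n - 1 → 0 ≤ (-1 : ℝ) ^ (n - 1 - j) * g.coeff j :=
  stmt3_general f g n hmonic hdeg hroots r hfg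
end

section
/- Let f be a monic real polynomial of degree n ≥ 1 satisfying Assumption 1, with even/odd splitting f = p − q. If r ≥ 0 is a real root of f and x₀ is a real number with x₀ ≥ r, then x₀ · q(x₀) − r · p(x₀) ≥ 0; in particular, if x₀ > 0 then x₀ · q(x₀)/p(x₀) ≥ r. -/
/-!
Factor `f = (X - r) g`. Every root `a` of `g` has `0 ≤ re a`, so `‖x - a‖ ≤ ‖x + a‖` for `x ≥ 0`,
whence `|g x| ≤ |g (-x)| = H x := (-1) ^ (n - 1) g (-x)`, and `H x > 0` for `x > 0` since `g`
has no real root below `0`. On the other hand `p - q = f x = (x - r) g x` and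
`p + q = (-1) ^ n f (-x) = (x + r) H x`, so `x q - r p = (x² - r²) (H x - g x) / 2 ≥ 0`.
-/

open Polynomial

theorem Complex.norm_ofReal_sub_le_norm_ofReal_add {x : ℝ} (hx : 0 ≤ x) {a : ℂ} (ha : 0 ≤ a.re) :
    ‖(x : ℂ) - a‖ ≤ ‖(x : ℂ) + a‖ := by
  rw [← sq_le_sq₀ (norm_nonneg _) (norm_nonneg _), Complex.sq_norm, Complex.sq_norm,
    Complex.normSq_apply, Complex.normSq_apply]
  simp only [Complex.sub_re, Complex.sub_im, Complex.add_re, Complex.add_im,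
    Complex.ofReal_re, Complex.ofReal_im]
  nlinarith [mul_nonneg hx ha]

theorem Polynomial.abs_eval_eq_prod_norm_aroots (g : ℝ[X]) (t : ℝ) :
    |g.eval t| = |g.leadingCoeff| * ((g.aroots ℂ).map (‖(t : ℂ) - ·‖)).prod := by
  have hsplit := (IsAlgClosed.splits (g.map (algebraMap ℝ ℂ))).eval_eq_prod_roots (t : ℂ)
  rw [eval_map_algebraMap, leadingCoeff_map] at hsplit
  have hprod := map_multiset_prod (normHom : ℂ →*₀ ℝ) ((g.aroots ℂ).map ((t : ℂ) - ·))
  rw [Multiset.map_map] at hprod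
  calc |g.eval t| = ‖((g.eval t : ℝ) : ℂ)‖ := by rw [Complex.norm_real, Real.norm_eq_abs]
    _ = ‖(algebraMap ℝ ℂ g.leadingCoeff) * ((g.aroots ℂ).map ((t : ℂ) - ·)).prod‖ := by
      rw [← hsplit]
      exact congrArg _ (ofReal_eval g t)
    _ = _ := by
      rw [norm_mul, Complex.coe_algebraMap, Complex.norm_real, Real.norm_eq_abs]
      exact congrArg _ hprod

theorem Polynomial.abs_eval_le_abs_eval_neg {g : ℝ[X]}
    (hg : ∀ z : ℂ, aeval z g = 0 → 0 ≤ z.re) {x : ℝ} (hx : 0 ≤ x) :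
    |g.eval x| ≤ |g.eval (-x)| := by
  rw [g.abs_eval_eq_prod_norm_aroots, g.abs_eval_eq_prod_norm_aroots]
  refine mul_le_mul_of_nonneg_left (Multiset.prod_map_le_prod_map₀ _ _ (fun _ _ => norm_nonneg _)
    fun a ha => ?_) (abs_nonneg _)
  rw [Complex.ofReal_neg, show -(x : ℂ) - a = -(x + a) by ring, norm_neg]
  exact Complex.norm_ofReal_sub_le_norm_ofReal_add hx (hg a (mem_aroots.mp ha).2)

theorem Polynomial.neg_one_pow_natDegree_mul_eval_neg_pos {g : ℝ[X]} (hlc : 0 ≤ g.leadingCoeff)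
    (hroots : ∀ z : ℂ, aeval z g = 0 → 0 ≤ z.re) {x : ℝ} (hx : 0 < x) :
    0 < (-1) ^ g.natDegree * g.eval (-x) := by
  have hreal : ∀ y, g.IsRoot y → -x < y := fun y hy => by
    have := hroots y ((ofReal_eval g y).symm.trans (by simp [hy.eq_zero]))
    rw [Complex.ofReal_re] at this
    linarith
  simpa [Int.cast_negOnePow_natCast] using
    zero_lt_negOnePow_mul_eval_of_lt_roots_of_leadingCoeff_nonneg hreal hlc

theorem Polynomial.abs_eval_le_neg_one_pow_natDegree_mul_eval_neg {g : ℝ[X]}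
    (hlc : 0 ≤ g.leadingCoeff) (hroots : ∀ z : ℂ, aeval z g = 0 → 0 ≤ z.re) {x : ℝ}
    (hx : 0 < x) : |g.eval x| ≤ (-1) ^ g.natDegree * g.eval (-x) :=
  calc |g.eval x| ≤ |g.eval (-x)| := abs_eval_le_abs_eval_neg hroots hx.le
    _ = |(-1) ^ g.natDegree * g.eval (-x)| := by simp [abs_mul]
    _ = (-1) ^ g.natDegree * g.eval (-x) :=
      abs_of_pos (neg_one_pow_natDegree_mul_eval_neg_pos hlc hroots hx)

theorem Polynomial.Monic.exists_eq_X_sub_C_mul {R : Type*} [CommRing R] {f : R[X]} (hf : f.Monic)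
    {r : R} (hr : f.IsRoot r) : ∃ g : R[X], g.Monic ∧ f = (X - C r) * g := by
  have hfactor : (X - C r) * (f /ₘ (X - C r)) = f := mul_divByMonic_eq_iff_isRoot.mpr hr
  exact ⟨_, (monic_X_sub_C r).of_mul_monic_left (by rw [hfactor]; exact hf), hfactor.symm⟩

def evenPart (f : ℝ[X]) (n : ℕ) (x : ℝ) : ℝ :=
  ∑ j ∈ Finset.range (n + 1), if (n + j) % 2 = 0 then f.coeff j * x ^ j else 0

def oddPart (f : ℝ[X]) (n : ℕ) (x : ℝ) : ℝ :=
  ∑ j ∈ Finset.range (n + 1), if (n + j) % 2 = 1 then -(f.coeff j) * x ^ j else 0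

theorem evenPart_sub_oddPart {f : ℝ[X]} {n : ℕ} (hdeg : f.natDegree ≤ n) (x : ℝ) :
    evenPart f n x - oddPart f n x = f.eval x := by
  rw [evenPart, oddPart, ← Finset.sum_sub_distrib, eval_eq_sum_range' (Nat.lt_succ_of_le hdeg)]
  refine Finset.sum_congr rfl fun j _ => ?_
  rcases Nat.mod_two_eq_zero_or_one (n + j) with h | h <;> simp [h]

theorem evenPart_add_oddPart {f : ℝ[X]} {n : ℕ} (hdeg : f.natDegree ≤ n) (x : ℝ) :
    evenPart f n x + oddPart f n x = (-1) ^ n * f.eval (-x) := by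
  rw [evenPart, oddPart, ← Finset.sum_add_distrib, eval_eq_sum_range' (Nat.lt_succ_of_le hdeg),
    Finset.mul_sum]
  refine Finset.sum_congr rfl fun j _ => ?_
  have hsign : (-1 : ℝ) ^ n * (-x) ^ j = (-1) ^ (n + j) * x ^ j := by
    rw [neg_pow x j, pow_add]; ring
  rw [mul_left_comm, hsign]
  rcases Nat.mod_two_eq_zero_or_one (n + j) with h | h
  · simp [h, Nat.even_iff.mpr h]
  · simp [h, Nat.odd_iff.mpr h]

theorem mul_sub_mul_nonneg_of_abs_le {r x G H P Q : ℝ} (hr : 0 ≤ r) (hrx : r ≤ x)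
    (hGH : |G| ≤ H) (hsub : P - Q = (x - r) * G) (hadd : P + Q = (x + r) * H) :
    0 ≤ x * Q - r * P := by
  have hG : G ≤ H := (le_abs_self G).trans hGH
  have key : x * Q - r * P = (x ^ 2 - r ^ 2) * (H - G) / 2 := by
    linear_combination (x - r) / 2 * hadd - (x + r) / 2 * hsub
  rw [key]
  have : 0 ≤ x ^ 2 - r ^ 2 := by nlinarith
  positivity

theorem le_mul_div_of_abs_le {r x G H P Q : ℝ} (hr : 0 ≤ r) (hrx : r ≤ x)
    (hGH : |G| ≤ H) (hH : 0 < H) (hsub : P - Q = (x - r) * G) (hadd : P + Q = (x + r) * H) :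
    r ≤ x * Q / P := by
  have hmain := mul_sub_mul_nonneg_of_abs_le hr hrx hGH hsub hadd
  have hP : r * H ≤ P := by nlinarith [neg_abs_le G]
  rcases hr.eq_or_lt with rfl | hr
  · exact div_nonneg (by linarith) (by linarith)
  · rw [le_div_iff₀ (by nlinarith)]
    linarith

theorem stmt6_general (f : Polynomial ℝ) (n : ℕ)
    (hmonic : f.Monic) (hdeg : f.natDegree = n)
    (has1 : ∀ z : ℂ, (Polynomial.aeval z) f = 0 → 0 ≤ z.re)
    (p q : ℝ → ℝ)
    (hp : ∀ x : ℝ, p x =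
      ∑ j ∈ Finset.range (n + 1), if (n + j) % 2 = 0 then f.coeff j * x ^ j else 0)
    (hq : ∀ x : ℝ, q x =
      ∑ j ∈ Finset.range (n + 1), if (n + j) % 2 = 1 then -(f.coeff j) * x ^ j else 0)
    (r : ℝ) (hr : 0 ≤ r) (hroot : f.IsRoot r)
    (x₀ : ℝ) (hx₀ : r ≤ x₀) :
    0 ≤ x₀ * q x₀ - r * p x₀ ∧ (0 < x₀ → r ≤ x₀ * q x₀ / p x₀) := by
  rcases (hr.trans hx₀).eq_or_lt with rfl | hx₀pos
  · obtain rfl : r = 0 := le_antisymm hx₀ hr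
    simp
  obtain ⟨g, hg, rfl⟩ := hmonic.exists_eq_X_sub_C_mul hroot
  have hgroots : ∀ z : ℂ, aeval z g = 0 → 0 ≤ z.re := fun z hz =>
    has1 z (by rw [map_mul, hz, mul_zero])
  have hn : n = g.natDegree + 1 := by
    rw [← hdeg, (monic_X_sub_C r).natDegree_mul hg, natDegree_X_sub_C, add_comm]
  have hlc : 0 ≤ g.leadingCoeff := hg.leadingCoeff ▸ zero_le_one
  have hGH := abs_eval_le_neg_one_pow_natDegree_mul_eval_neg hlc hgroots hx₀pos
  have hH := neg_one_pow_natDegree_mul_eval_neg_pos hlc hgroots hx₀pos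
  have hsub : p x₀ - q x₀ = (x₀ - r) * g.eval x₀ := by
    rw [hp, hq, ← evenPart, ← oddPart, evenPart_sub_oddPart hdeg.le]
    simp
  have hadd : p x₀ + q x₀ = (x₀ + r) * ((-1) ^ g.natDegree * g.eval (-x₀)) := by
    rw [hp, hq, ← evenPart, ← oddPart, evenPart_add_oddPart hdeg.le, hn]
    simp only [eval_mul, eval_sub, eval_X, eval_C, pow_succ]
    ring
  exact ⟨mul_sub_mul_nonneg_of_abs_le hr hx₀ hGH hsub hadd,
    fun _ => le_mul_div_of_abs_le hr hx₀ hGH hH hsub hadd⟩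

/-- Let `f` be a monic real polynomial of degree `n ≥ 1` satisfying
Assumption 1, with even/odd splitting `f = p - q`. If `r ≥ 0` is a real root of `f` and
`x₀ ≥ r`, then `x₀ * q x₀ - r * p x₀ ≥ 0`; in particular, if `x₀ > 0` then
`x₀ * q x₀ / p x₀ ≥ r`. -/
theorem stmt6 (f : Polynomial ℝ) (n : ℕ) (hn : 1 ≤ n)
    (hmonic : f.Monic) (hdeg : f.natDegree = n)
    (has1 : ∀ z : ℂ, (Polynomial.aeval z) f = 0 → 0 ≤ z.re)
    (has2 : ∃ z : ℂ, (Polynomial.aeval z) f = 0 ∧ 0 < z.re)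
    (p q : ℝ → ℝ)
    (hp : ∀ x : ℝ, p x =
      ∑ j ∈ Finset.range (n + 1), if (n + j) % 2 = 0 then f.coeff j * x ^ j else 0)
    (hq : ∀ x : ℝ, q x =
      ∑ j ∈ Finset.range (n + 1), if (n + j) % 2 = 1 then -(f.coeff j) * x ^ j else 0)
    (r : ℝ) (hr : 0 ≤ r) (hroot : f.IsRoot r)
    (x₀ : ℝ) (hx₀ : r ≤ x₀) :
    0 ≤ x₀ * q x₀ - r * p x₀ ∧ (0 < x₀ → r ≤ x₀ * q x₀ / p x₀) :=
  stmt6_general f n hmonic hdeg has1 p q hp hq r hr hroot x₀ hx₀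
end

section
/- Let f be a monic real polynomial of degree n ≥ 1 satisfying Assumption 1, with even/odd splitting f = p − q. If r is a real root of f and x₀ is a real number with 0 ≤ x₀ ≤ r, then r · q(x₀) − x₀ · p(x₀) ≥ 0; in particular, if x₀ > 0 then x₀ · p(x₀)/q(x₀) ≤ r. -/
open Polynomial

/-- Sign pattern is multiplicative. -/
private lemma sign_mul_aux (a b : Polynomial ℝ) (ma mb : ℕ)
    (ha : ∀ j, 0 ≤ (-1 : ℝ) ^ (ma + j) * a.coeff j)
    (hb : ∀ j, 0 ≤ (-1 : ℝ) ^ (mb + j) * b.coeff j) :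
    ∀ j, 0 ≤ (-1 : ℝ) ^ (ma + mb + j) * (a * b).coeff j := by
  intro j
  rw [Polynomial.coeff_mul, Finset.mul_sum]
  apply Finset.sum_nonneg
  rintro ⟨u, v⟩ huv
  have huv' : u + v = j := Finset.HasAntidiagonal.mem_antidiagonal.mp huv
  have : (-1 : ℝ) ^ (ma + mb + j) * (a.coeff u * b.coeff v)
      = ((-1 : ℝ) ^ (ma + u) * a.coeff u) * ((-1 : ℝ) ^ (mb + v) * b.coeff v) := by
    rw [← huv', show ma + mb + (u + v) = (ma + u) + (mb + v) by omega, pow_add]; ring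
  rw [this]
  exact mul_nonneg (ha u) (hb v)

/-- A monic real polynomial all of whose complex roots have nonnegative real part
has alternating coefficient signs. -/
private lemma coeff_sign_aux : ∀ (m : ℕ) (g : Polynomial ℝ), g.natDegree = m → g.Monic →
    (∀ z : ℂ, Polynomial.aeval z g = 0 → 0 ≤ z.re) →
    ∀ j, 0 ≤ (-1 : ℝ) ^ (m + j) * g.coeff j := by
  intro m
  induction m using Nat.strong_induction_on with
  | _ m ih =>
    intro g hdeg hmon hroots j
    rcases Nat.eq_zero_or_pos m with hm0 | hmpos
    · subst hm0
      have : g = 1 := hmon.natDegree_eq_zero.mp hdeg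
      subst this
      rcases j with _ | j <;> simp [Polynomial.coeff_one]
    · -- g has positive degree, so has a complex root
      have hgne : g ≠ 0 := hmon.ne_zero
      have hdegpos : 0 < (g.map (algebraMap ℝ ℂ)).degree := by
        rw [Polynomial.degree_map, Polynomial.degree_eq_natDegree hgne, hdeg]
        exact_mod_cast hmpos
      obtain ⟨z, hz⟩ := Complex.exists_root hdegpos
      have hz' : Polynomial.aeval z g = 0 := by
        rwa [Polynomial.aeval_def, ← Polynomial.eval_map]
      rcases eq_or_ne z.im 0 with hzim | hzim
      · -- real root case
        have hre : 0 ≤ z.re := hroots z hz'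
        have hzr : (z.re : ℂ) = z := by
          exact Complex.ext rfl hzim.symm
        have hroot : g.IsRoot z.re := by
          rw [← hzr] at hz'
          erw [aeval_ofReal, RCLike.ofReal_eq_zero] at hz'
          exact hz'
        obtain ⟨g', hg'⟩ := Polynomial.dvd_iff_isRoot.mpr hroot
        have hmon' : g'.Monic :=
          Polynomial.Monic.of_mul_monic_left (monic_X_sub_C z.re) (hg' ▸ hmon)
        have hdeg' : m = 1 + g'.natDegree := by
          rw [← hdeg, hg', (monic_X_sub_C z.re).natDegree_mul hmon', natDegree_X_sub_C]
        have hroots' : ∀ w : ℂ, Polynomial.aeval w g' = 0 → 0 ≤ w.re := by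
          intro w hw
          apply hroots w
          rw [hg', map_mul, hw, mul_zero]
        have hsignl : ∀ j, 0 ≤ (-1 : ℝ) ^ (1 + j) * (X - C z.re).coeff j := by
          intro j
          rcases j with _ | _ | j <;>
            simp [Polynomial.coeff_sub, Polynomial.coeff_X, Polynomial.coeff_C, pow_succ, hre]
        have hsignr := ih g'.natDegree (by omega) g' rfl hmon' hroots'
        have := sign_mul_aux _ _ 1 g'.natDegree hsignl hsignr j
        rwa [← hg', ← hdeg'] at this
      · -- complex root case
        have hre : 0 ≤ z.re := hroots z hz'
        obtain ⟨g', hg'⟩ := g.quadratic_dvd_of_aeval_eq_zero_im_ne_zero hz' hzim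
        have hQmon : (X ^ 2 - C (2 * z.re) * X + C (‖z‖ ^ 2) : Polynomial ℝ).Monic := by
          monicity!
        have hQdeg : (X ^ 2 - C (2 * z.re) * X + C (‖z‖ ^ 2) : Polynomial ℝ).natDegree = 2 := by
          compute_degree!
        have hmon' : g'.Monic :=
          Polynomial.Monic.of_mul_monic_left hQmon (hg' ▸ hmon)
        have hdeg' : m = 2 + g'.natDegree := by
          rw [← hdeg, hg', hQmon.natDegree_mul hmon', hQdeg]
        have hroots' : ∀ w : ℂ, Polynomial.aeval w g' = 0 → 0 ≤ w.re := by
          intro w hw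
          apply hroots w
          rw [hg', map_mul, hw, mul_zero]
        have hsignl : ∀ j, 0 ≤ (-1 : ℝ) ^ (2 + j) *
            (X ^ 2 - C (2 * z.re) * X + C (‖z‖ ^ 2) : Polynomial ℝ).coeff j := by
          intro j
          rcases j with _ | _ | _ | j <;>
            simp [Polynomial.coeff_add, Polynomial.coeff_sub, Polynomial.coeff_X_pow,
              Polynomial.coeff_C, Polynomial.coeff_C_mul, Polynomial.coeff_X, pow_succ,
              Polynomial.coeff_X_mul]
          · positivity
          · nlinarith [hre]
        have hsignr := ih g'.natDegree (by omega) g' rfl hmon' hroots'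
        have := sign_mul_aux _ _ 2 g'.natDegree hsignl hsignr j
        rwa [← hg', ← hdeg'] at this

/-- Let `f` be a monic real polynomial of degree `n ≥ 1` satisfying
Assumption 1, with even/odd splitting `f = p - q`. If `r` is a real root of `f` and
`0 ≤ x₀ ≤ r`, then `r * q x₀ - x₀ * p x₀ ≥ 0`; in particular, if `x₀ > 0` then
`x₀ * p x₀ / q x₀ ≤ r`. -/
theorem stmt7 (f : Polynomial ℝ) (n : ℕ) (hn : 1 ≤ n)
    (hmonic : f.Monic) (hdeg : f.natDegree = n)
    (has1 : ∀ z : ℂ, (Polynomial.aeval z) f = 0 → 0 ≤ z.re)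
    (has2 : ∃ z : ℂ, (Polynomial.aeval z) f = 0 ∧ 0 < z.re)
    (p q : ℝ → ℝ)
    (hp : ∀ x : ℝ, p x =
      ∑ j ∈ Finset.range (n + 1), if (n + j) % 2 = 0 then f.coeff j * x ^ j else 0)
    (hq : ∀ x : ℝ, q x =
      ∑ j ∈ Finset.range (n + 1), if (n + j) % 2 = 1 then -(f.coeff j) * x ^ j else 0)
    (r : ℝ) (hroot : f.IsRoot r)
    (x₀ : ℝ) (hx₀0 : 0 ≤ x₀) (hx₀r : x₀ ≤ r) :
    0 ≤ r * q x₀ - x₀ * p x₀ ∧ (0 < x₀ → x₀ * p x₀ / q x₀ ≤ r) := by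
  have hfsign := coeff_sign_aux n f hdeg hmonic has1
  -- factor f = (X - C r) * g
  obtain ⟨g, hg⟩ := Polynomial.dvd_iff_isRoot.mpr hroot
  have hgmon : g.Monic := Polynomial.Monic.of_mul_monic_left (monic_X_sub_C r) (hg ▸ hmonic)
  set m := g.natDegree with hm
  have hnm : n = m + 1 := by
    rw [← hdeg, hg, (monic_X_sub_C r).natDegree_mul hgmon, natDegree_X_sub_C]; omega
  have hgroots : ∀ w : ℂ, Polynomial.aeval w g = 0 → 0 ≤ w.re := by
    intro w hw; apply has1 w; rw [hg, map_mul, hw, mul_zero]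
  have hgsign := coeff_sign_aux m g rfl hgmon hgroots
  -- p and q via evaluations
  have hfd : f.natDegree < n + 1 := by omega
  have hp' : p x₀ = (f.eval x₀ + (-1 : ℝ) ^ n * f.eval (-x₀)) / 2 := by
    rw [hp, Polynomial.eval_eq_sum_range' hfd, Polynomial.eval_eq_sum_range' hfd,
      Finset.mul_sum, ← Finset.sum_add_distrib, Finset.sum_div]
    apply Finset.sum_congr rfl
    intro j _
    have key : (-1 : ℝ) ^ n * (f.coeff j * (-x₀) ^ j)
        = (-1 : ℝ) ^ (n + j) * (f.coeff j * x₀ ^ j) := by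
      rw [neg_pow, pow_add]; ring
    rw [key]
    rcases Nat.even_or_odd (n + j) with he | ho
    · rw [if_pos (Nat.even_iff.mp he), he.neg_one_pow]; ring
    · rw [if_neg (by rw [Nat.odd_iff] at ho; omega), ho.neg_one_pow]; ring
  have hq' : q x₀ = ((-1 : ℝ) ^ n * f.eval (-x₀) - f.eval x₀) / 2 := by
    rw [hq, Polynomial.eval_eq_sum_range' hfd, Polynomial.eval_eq_sum_range' hfd,
      Finset.mul_sum, ← Finset.sum_sub_distrib, Finset.sum_div]
    apply Finset.sum_congr rfl
    intro j _
    have key : (-1 : ℝ) ^ n * (f.coeff j * (-x₀) ^ j)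
        = (-1 : ℝ) ^ (n + j) * (f.coeff j * x₀ ^ j) := by
      rw [neg_pow, pow_add]; ring
    rw [key]
    rcases Nat.even_or_odd (n + j) with he | ho
    · rw [if_neg (by rw [Nat.even_iff] at he; omega), he.neg_one_pow]; ring
    · rw [if_pos (Nat.odd_iff.mp ho), ho.neg_one_pow]; ring
  -- the key nonnegativity
  have hgd : g.natDegree < m + 1 := by omega
  have hGnn : 0 ≤ g.eval x₀ + (-1 : ℝ) ^ m * g.eval (-x₀) := by
    rw [Polynomial.eval_eq_sum_range' hgd, Polynomial.eval_eq_sum_range' hgd,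
      Finset.mul_sum, ← Finset.sum_add_distrib]
    apply Finset.sum_nonneg
    intro j _
    have key : (-1 : ℝ) ^ m * (g.coeff j * (-x₀) ^ j)
        = (-1 : ℝ) ^ (m + j) * (g.coeff j * x₀ ^ j) := by
      rw [neg_pow, pow_add]; ring
    rw [key]
    rcases Nat.even_or_odd (m + j) with he | ho
    · rw [he.neg_one_pow, one_mul]
      have hc : 0 ≤ g.coeff j := by
        have := hgsign j; rwa [he.neg_one_pow, one_mul] at this
      have := mul_nonneg hc (pow_nonneg hx₀0 j)
      linarith
    · rw [ho.neg_one_pow]; linarith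
  have hfeval : ∀ t : ℝ, f.eval t = (t - r) * g.eval t := by
    intro t; rw [hg]; simp
  have hkey : r * q x₀ - x₀ * p x₀
      = (r - x₀) * (r + x₀) * (g.eval x₀ + (-1 : ℝ) ^ m * g.eval (-x₀)) / 2 := by
    rw [hp', hq', hfeval x₀, hfeval (-x₀)]
    have he : (-1 : ℝ) ^ n = -(-1 : ℝ) ^ m := by rw [hnm, pow_succ]; ring
    rw [he]; ring
  have part1 : 0 ≤ r * q x₀ - x₀ * p x₀ := by
    rw [hkey]
    apply div_nonneg _ (by norm_num)
    exact mul_nonneg (mul_nonneg (by linarith) (by linarith)) hGnn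
  refine ⟨part1, ?_⟩
  intro hx
  have hq0 : 0 ≤ q x₀ := by
    rw [hq]
    apply Finset.sum_nonneg
    intro j _
    split_ifs with h
    · have hodd : Odd (n + j) := Nat.odd_iff.mpr h
      have hs := hfsign j
      rw [hodd.neg_one_pow] at hs
      exact mul_nonneg (by linarith) (pow_nonneg hx₀0 j)
    · exact le_refl _
  rcases eq_or_lt_of_le hq0 with h | h
  · rw [← h, div_zero]; linarith
  · rw [div_le_iff₀ h]; linarith
end

section
/- (Main Theorem) Let f be a monic real polynomial of degree n ≥ 1 satisfying Assumption 1, with even/odd splitting f = p − q. Let a, b, x₀ be real numbers with 0 < x₀, a ≤ x₀ ≤ b, such that a is either 0 or a real root of f, b is a real root of f, and f has no real root in the open interval (a, b). Then both updated points x₁ := x₀ · p(x₀)/q(x₀) and x₋₁ := x₀ · q(x₀)/p(x₀) lie in the interval [a, b]. -/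
/-!
Over `ℂ`, `|f(x)| = ∏ |x - z|` and `|f(-x)| = ∏ |x + z|`, the products running over the roots
`z` of `f`; for `x > 0` and `re z ≥ 0` each factor satisfies `|x - z| ≤ |x + z|`, strictly when
`re z > 0`. On `x > 0` we have `p - q = f` and `p + q = (-1)ⁿ f(-x) = |f(-x)|` (the sign because
`f` has no negative real root), so `|p - q| < p + q`, whence `p, q > 0`. Splitting off the factor
of a real root `r ≥ 0` sharpens this to `(x + r) |p - q| ≤ |x - r| (p + q)`, and for `r = a` and
`r = b` these two inequalities say precisely that `x p / q` and `x q / p` lie in `[a, b]`.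
-/

open Polynomial

namespace Complex

lemma norm_ofReal_sub_le_norm_ofReal_add_s8 {x : ℝ} (hx : 0 ≤ x) {z : ℂ} (hz : 0 ≤ z.re) :
    ‖(x : ℂ) - z‖ ≤ ‖(x : ℂ) + z‖ := by
  rw [← sq_le_sq₀ (norm_nonneg _) (norm_nonneg _), ← normSq_eq_norm_sq, ← normSq_eq_norm_sq]
  simp only [normSq_apply, sub_re, add_re, sub_im, add_im, ofReal_re, ofReal_im]
  nlinarith [mul_nonneg hx hz]

lemma norm_ofReal_sub_lt_norm_ofReal_add {x : ℝ} (hx : 0 < x) {z : ℂ} (hz : 0 < z.re) :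
    ‖(x : ℂ) - z‖ < ‖(x : ℂ) + z‖ := by
  rw [← sq_lt_sq₀ (norm_nonneg _) (norm_nonneg _), ← normSq_eq_norm_sq, ← normSq_eq_norm_sq]
  simp only [normSq_apply, sub_re, add_re, sub_im, add_im, ofReal_re, ofReal_im]
  nlinarith [mul_pos hx hz]

lemma norm_ofReal_add_pos {x : ℝ} (hx : 0 < x) {z : ℂ} (hz : 0 ≤ z.re) :
    0 < ‖(x : ℂ) + z‖ :=
  (add_pos_of_pos_of_nonneg hx hz).trans_le (by simpa using re_le_norm ((x : ℂ) + z))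

end Complex

open Complex

namespace Multiset

variable {s : Multiset ℂ} {x : ℝ}

lemma prod_map_norm_ofReal_sub_le (hs : ∀ z ∈ s, 0 ≤ z.re) (hx : 0 ≤ x) :
    (s.map fun z => ‖(x : ℂ) - z‖).prod ≤ (s.map fun z => ‖(x : ℂ) + z‖).prod :=
  prod_map_le_prod_map₀ _ _ (fun _ _ => norm_nonneg _)
    fun z hz => norm_ofReal_sub_le_norm_ofReal_add_s8 hx (hs z hz)

lemma norm_ofReal_add_mul_prod_map_le {w : ℂ} (hw : w ∈ s) (hs : ∀ z ∈ s, 0 ≤ z.re)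
    (hx : 0 ≤ x) :
    ‖(x : ℂ) + w‖ * (s.map fun z => ‖(x : ℂ) - z‖).prod ≤
      ‖(x : ℂ) - w‖ * (s.map fun z => ‖(x : ℂ) + z‖).prod := by
  rw [← cons_erase hw, map_cons, prod_cons, map_cons, prod_cons, mul_left_comm]
  gcongr
  exact prod_map_norm_ofReal_sub_le (fun z hz => hs z (mem_of_mem_erase hz)) hx

lemma prod_map_norm_ofReal_sub_lt {w : ℂ} (hw : w ∈ s) (hw_re : 0 < w.re)
    (hs : ∀ z ∈ s, 0 ≤ z.re) (hx : 0 < x) :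
    (s.map fun z => ‖(x : ℂ) - z‖).prod < (s.map fun z => ‖(x : ℂ) + z‖).prod := by
  have hs' : ∀ z ∈ s.erase w, 0 ≤ z.re := fun z hz => hs z (mem_of_mem_erase hz)
  rw [← cons_erase hw, map_cons, prod_cons, map_cons, prod_cons]
  calc ‖(x : ℂ) - w‖ * ((s.erase w).map fun z => ‖(x : ℂ) - z‖).prod
      ≤ ‖(x : ℂ) - w‖ * ((s.erase w).map fun z => ‖(x : ℂ) + z‖).prod := by
        gcongr
        exact prod_map_norm_ofReal_sub_le hs' hx.le
    _ < ‖(x : ℂ) + w‖ * ((s.erase w).map fun z => ‖(x : ℂ) + z‖).prod := by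
        gcongr
        · exact prod_pos fun y hy => by
            obtain ⟨z, hz, rfl⟩ := mem_map.mp hy
            exact norm_ofReal_add_pos hx (hs' z hz)
        · exact norm_ofReal_sub_lt_norm_ofReal_add hx hw_re

end Multiset

namespace Polynomial

-- `aeval_ofReal` is phrased with `RCLike.ofReal`, which `rw` does not match with `Complex.ofReal`.
lemma aeval_ofReal_eq_ofReal_eval (f : ℝ[X]) (x : ℝ) :
    aeval (x : ℂ) f = ((f.eval x : ℝ) : ℂ) :=
  aeval_ofReal f x

variable {f : ℝ[X]}

lemma ofReal_mem_aroots {r : ℝ} (hf : f ≠ 0) (hr : f.IsRoot r) : (r : ℂ) ∈ f.aroots ℂ :=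
  mem_aroots.mpr ⟨hf, by rw [aeval_ofReal_eq_ofReal_eval, hr.eq_zero, Complex.ofReal_zero]⟩

lemma Monic.abs_eval_eq_prod_aroots (hf : f.Monic) (x : ℝ) :
    |f.eval x| = ((f.aroots ℂ).map fun z => ‖(x : ℂ) - z‖).prod := by
  rw [← Real.norm_eq_abs, ← Complex.norm_real, ← aeval_ofReal_eq_ofReal_eval,
    (IsAlgClosed.splits _).aeval_eq_prod_aroots_of_monic hf]
  exact (map_multiset_prod (normHom : ℂ →*₀ ℝ) _).trans (by rw [Multiset.map_map]; rfl)

lemma Monic.abs_eval_neg_eq_prod_aroots (hf : f.Monic) (x : ℝ) :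
    |f.eval (-x)| = ((f.aroots ℂ).map fun z => ‖(x : ℂ) + z‖).prod := by
  rw [hf.abs_eval_eq_prod_aroots]
  congr 1
  refine Multiset.map_congr rfl fun z _ => ?_
  rw [← norm_neg]
  push_cast
  ring_nf

lemma Monic.eval_pos_of_forall_gt_not_isRoot (hf : f.Monic) {c x : ℝ}
    (hroots : ∀ y, c < y → ¬ f.IsRoot y) (hx : c < x) : 0 < f.eval x := by
  rcases eq_or_ne f.natDegree 0 with h0 | h0
  · simp [eq_one_of_monic_natDegree_zero hf h0]
  have htends := f.tendsto_atTop_of_leadingCoeff_nonneg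
    (natDegree_pos_iff_degree_pos.mp (Nat.pos_of_ne_zero h0)) (by simp [hf.leadingCoeff])
  obtain ⟨y, hy, hxy⟩ := ((htends.eventually_gt_atTop 0).and (Filter.eventually_ge_atTop x)).exists
  by_contra! hfx
  obtain ⟨z, hz, hfz⟩ := intermediate_value_Icc hxy f.continuousOn (Set.mem_Icc.mpr ⟨hfx, hy.le⟩)
  exact hroots z (hx.trans_le hz.1) hfz

lemma Monic.abs_eval_neg_eq_neg_one_pow_mul (hf : f.Monic)
    (hroots : ∀ y < 0, ¬ f.IsRoot y) {x : ℝ} (hx : 0 < x) :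
    |f.eval (-x)| = (-1) ^ f.natDegree * f.eval (-x) := by
  have hpos := hf.neg_one_pow_natDegree_mul_comp_neg_X.eval_pos_of_forall_gt_not_isRoot
    (c := 0) (fun y hy hroot => hroots (-y) (by linarith) ?_) hx
  · simp only [eval_mul, eval_pow, eval_neg, eval_one, eval_comp, eval_X] at hpos
    rw [← abs_of_pos hpos, abs_mul, abs_pow, abs_neg, abs_one, one_pow, one_mul]
  · simpa [IsRoot, pow_ne_zero] using hroot

lemma Monic.abs_eval_lt_abs_eval_neg (hf : f.Monic) (hre : ∀ z ∈ f.aroots ℂ, 0 ≤ z.re)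
    {w : ℂ} (hw : w ∈ f.aroots ℂ) (hw_re : 0 < w.re) {x : ℝ} (hx : 0 < x) :
    |f.eval x| < |f.eval (-x)| := by
  rw [hf.abs_eval_eq_prod_aroots, hf.abs_eval_neg_eq_prod_aroots]
  exact Multiset.prod_map_norm_ofReal_sub_lt hw hw_re hre hx

lemma Monic.abs_add_mul_abs_eval_le (hf : f.Monic) (hre : ∀ z ∈ f.aroots ℂ, 0 ≤ z.re)
    {r : ℝ} (hr : f.IsRoot r) {x : ℝ} (hx : 0 ≤ x) :
    |x + r| * |f.eval x| ≤ |x - r| * |f.eval (-x)| := by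
  rw [hf.abs_eval_eq_prod_aroots, hf.abs_eval_neg_eq_prod_aroots]
  simpa only [← Complex.ofReal_add, ← Complex.ofReal_sub, Complex.norm_real, Real.norm_eq_abs]
    using Multiset.norm_ofReal_add_mul_prod_map_le (ofReal_mem_aroots hf.ne_zero hr) hre hx

lemma parity_split_sub_eq_eval {n : ℕ} (hdeg : f.natDegree ≤ n) (x : ℝ) :
    (∑ j ∈ Finset.range (n + 1), if (n + j) % 2 = 0 then f.coeff j * x ^ j else 0) -
      (∑ j ∈ Finset.range (n + 1), if (n + j) % 2 = 1 then -(f.coeff j) * x ^ j else 0) =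
      f.eval x := by
  rw [eval_eq_sum_range' (Nat.lt_succ_of_le hdeg), ← Finset.sum_sub_distrib]
  refine Finset.sum_congr rfl fun j _ => ?_
  rcases Nat.mod_two_eq_zero_or_one (n + j) with h | h <;> simp [h]

lemma parity_split_add_eq_eval_neg {n : ℕ} (hdeg : f.natDegree ≤ n) (x : ℝ) :
    (∑ j ∈ Finset.range (n + 1), if (n + j) % 2 = 0 then f.coeff j * x ^ j else 0) +
      (∑ j ∈ Finset.range (n + 1), if (n + j) % 2 = 1 then -(f.coeff j) * x ^ j else 0) =
      (-1) ^ n * f.eval (-x) := by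
  rw [eval_eq_sum_range' (Nat.lt_succ_of_le hdeg), Finset.mul_sum, ← Finset.sum_add_distrib]
  refine Finset.sum_congr rfl fun j _ => ?_
  rw [show (-1) ^ n * (f.coeff j * (-x) ^ j) = (-1) ^ (n + j) * (f.coeff j * x ^ j) by ring]
  rcases Nat.mod_two_eq_zero_or_one (n + j) with h | h
  · simp [h, (Nat.even_iff.mpr h).neg_one_pow]
  · simp [h, (Nat.odd_iff.mpr h).neg_one_pow]

end Polynomial

lemma mul_div_mem_Icc_of_add_mul_abs_sub_le {x a b P Q : ℝ} (hQ : 0 < Q) (hxa : 0 ≤ x + a)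
    (hxb : 0 ≤ x + b) (ha : (x + a) * |P - Q| ≤ (x - a) * (P + Q))
    (hb : (x + b) * |P - Q| ≤ (b - x) * (P + Q)) : x * P / Q ∈ Set.Icc a b := by
  rw [Set.mem_Icc, le_div_iff₀ hQ, div_le_iff₀ hQ]
  constructor
  · nlinarith [mul_le_mul_of_nonneg_left (neg_le_abs (P - Q)) hxa]
  · nlinarith [mul_le_mul_of_nonneg_left (le_abs_self (P - Q)) hxb]

theorem stmt8_general (f : Polynomial ℝ) (n : ℕ)
    (hmonic : f.Monic) (hdeg : f.natDegree = n)
    (has1 : ∀ z : ℂ, (Polynomial.aeval z) f = 0 → 0 ≤ z.re)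
    (has2 : ∃ z : ℂ, (Polynomial.aeval z) f = 0 ∧ 0 < z.re)
    (p q : ℝ → ℝ)
    (hp : ∀ x : ℝ, p x =
      ∑ j ∈ Finset.range (n + 1), if (n + j) % 2 = 0 then f.coeff j * x ^ j else 0)
    (hq : ∀ x : ℝ, q x =
      ∑ j ∈ Finset.range (n + 1), if (n + j) % 2 = 1 then -(f.coeff j) * x ^ j else 0)
    (a b x₀ : ℝ) (hx₀ : 0 < x₀) (hax₀ : a ≤ x₀) (hx₀b : x₀ ≤ b)
    (ha : a = 0 ∨ f.IsRoot a) (hb : f.IsRoot b) :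
    x₀ * p x₀ / q x₀ ∈ Set.Icc a b ∧ x₀ * q x₀ / p x₀ ∈ Set.Icc a b := by
  have hre : ∀ z ∈ f.aroots ℂ, 0 ≤ z.re := fun z hz => has1 z (mem_aroots.mp hz).2
  have hroot_nonneg : ∀ r : ℝ, f.IsRoot r → 0 ≤ r := fun r hr => by
    simpa using hre r (ofReal_mem_aroots hmonic.ne_zero hr)
  have hsub : p x₀ - q x₀ = f.eval x₀ := by
    rw [hp, hq, parity_split_sub_eq_eval hdeg.le]
  have hadd : p x₀ + q x₀ = |f.eval (-x₀)| := by
    rw [hp, hq, parity_split_add_eq_eval_neg hdeg.le, ← hdeg,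
      hmonic.abs_eval_neg_eq_neg_one_pow_mul (fun y hy hy0 => (hroot_nonneg y hy0).not_gt hy) hx₀]
  obtain ⟨w, hw, hw_re⟩ := has2
  have hlt :=
    hmonic.abs_eval_lt_abs_eval_neg hre (mem_aroots.mpr ⟨hmonic.ne_zero, hw⟩) hw_re hx₀
  rw [← hsub, ← hadd] at hlt
  obtain ⟨hQ, hP⟩ : 0 < q x₀ ∧ 0 < p x₀ := by
    constructor <;> linarith [abs_sub_lt_iff.mp hlt]
  have ha0 : 0 ≤ a := ha.elim (fun h => h.ge) (hroot_nonneg a)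
  have ha' : (x₀ + a) * |p x₀ - q x₀| ≤ (x₀ - a) * (p x₀ + q x₀) := by
    rcases ha with rfl | ha
    · simpa using mul_le_mul_of_nonneg_left hlt.le hx₀.le
    · have := hmonic.abs_add_mul_abs_eval_le hre ha hx₀.le
      rwa [← hsub, ← hadd, abs_of_nonneg (by linarith : 0 ≤ x₀ + a),
        abs_of_nonneg (by linarith : 0 ≤ x₀ - a)] at this
  have hb' : (x₀ + b) * |p x₀ - q x₀| ≤ (b - x₀) * (p x₀ + q x₀) := by
    have := hmonic.abs_add_mul_abs_eval_le hre hb hx₀.le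
    rwa [← hsub, ← hadd, abs_of_nonneg (by linarith : 0 ≤ x₀ + b),
      abs_of_nonpos (by linarith : x₀ - b ≤ 0), neg_sub] at this
  refine ⟨mul_div_mem_Icc_of_add_mul_abs_sub_le hQ (by linarith) (by linarith) ha' hb',
    mul_div_mem_Icc_of_add_mul_abs_sub_le hP (by linarith) (by linarith) ?_ ?_⟩ <;>
    rwa [abs_sub_comm, add_comm (q x₀)]

/-- **Main Theorem.** Let `f` be a monic real polynomial of degree `n ≥ 1`
satisfying Assumption 1, with even/odd splitting `f = p - q`. Let `a, b, x₀` be reals with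
`0 < x₀`, `a ≤ x₀ ≤ b`, where `a` is either `0` or a real root of `f`, `b` is a real root
of `f`, and `f` has no real root in the open interval `(a, b)`. Then both updated points
`x₀ * p x₀ / q x₀` and `x₀ * q x₀ / p x₀` lie in `[a, b]`. -/
theorem stmt8 (f : Polynomial ℝ) (n : ℕ) (hn : 1 ≤ n)
    (hmonic : f.Monic) (hdeg : f.natDegree = n)
    (has1 : ∀ z : ℂ, (Polynomial.aeval z) f = 0 → 0 ≤ z.re)
    (has2 : ∃ z : ℂ, (Polynomial.aeval z) f = 0 ∧ 0 < z.re)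
    (p q : ℝ → ℝ)
    (hp : ∀ x : ℝ, p x =
      ∑ j ∈ Finset.range (n + 1), if (n + j) % 2 = 0 then f.coeff j * x ^ j else 0)
    (hq : ∀ x : ℝ, q x =
      ∑ j ∈ Finset.range (n + 1), if (n + j) % 2 = 1 then -(f.coeff j) * x ^ j else 0)
    (a b x₀ : ℝ) (hx₀ : 0 < x₀) (hax₀ : a ≤ x₀) (hx₀b : x₀ ≤ b)
    (ha : a = 0 ∨ f.IsRoot a) (hb : f.IsRoot b)
    (hnoroot : ∀ x : ℝ, a < x → x < b → ¬ f.IsRoot x) :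
    x₀ * p x₀ / q x₀ ∈ Set.Icc a b ∧ x₀ * q x₀ / p x₀ ∈ Set.Icc a b :=
  stmt8_general f n hmonic hdeg has1 has2 p q hp hq a b x₀ hx₀ hax₀ hx₀b ha hb
end

section
/- Let f be a monic real polynomial of degree n ≥ 1 satisfying Assumption 1, with even/odd splitting f = p − q. Let a, b, x₀ be real numbers with a < x₀ < b, such that a is either 0 or a real root of f, b is a real root of f, f has no real root in the open interval (a, b), and p(x₀) > q(x₀). Define the sequences x_{t+1} = x_t · p(x_t)/q(x_t) and y₀ = x₀, y_{t+1} = y_t · q(y_t)/p(y_t). Then (x_t) is nondecreasing, remains in [x₀, b], and converges to b, while (y_t) is nonincreasing, remains in [a, x₀], and converges to a. -/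
/-!
Put `N u = (-1) ^ n * f (-u)`, so that `p = (f + N) / 2` and `q = (N - f) / 2`. Over `ℂ`,
`|f u| = ∏ |u - zᵢ|` and `|N u| = ∏ |u + zᵢ|`, and `|u - z| ≤ |u + z|` for `u ≥ 0 ≤ re z`;
with the root of positive real part this gives `|f| < N` on `(0, ∞)`, i.e. `p, q > 0`.
Splitting off a real root `r` instead gives `(u + r) f u ≤ |u - r| N u`, which says that the
updates never jump over `r`. Since `f > 0` on `(a, b)`, the orbit of `x` increases inside
`[x₀, b]` and that of `y` decreases inside `[a, x₀]`; their limits are fixed points of the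
continuous update maps, hence roots of `f`, which forces them to be `b` and `a`.
-/

open Filter Set Polynomial Topology OrderDual

theorem Complex.norm_ofReal_sub_le_norm_add {u : ℝ} (hu : 0 ≤ u) {z : ℂ} (hz : 0 ≤ z.re) :
    ‖(u : ℂ) - z‖ ≤ ‖(u : ℂ) + z‖ := by
  rw [← sq_le_sq₀ (norm_nonneg _) (norm_nonneg _), Complex.sq_norm, Complex.sq_norm,
    Complex.normSq_apply, Complex.normSq_apply]
  simp only [Complex.sub_re, Complex.add_re, Complex.sub_im, Complex.add_im, Complex.ofReal_re,
    Complex.ofReal_im]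
  nlinarith [mul_nonneg hu hz]

theorem Complex.norm_ofReal_sub_lt_norm_add {u : ℝ} (hu : 0 < u) {z : ℂ} (hz : 0 < z.re) :
    ‖(u : ℂ) - z‖ < ‖(u : ℂ) + z‖ := by
  rw [← sq_lt_sq₀ (norm_nonneg _) (norm_nonneg _), Complex.sq_norm, Complex.sq_norm,
    Complex.normSq_apply, Complex.normSq_apply]
  simp only [Complex.sub_re, Complex.add_re, Complex.sub_im, Complex.add_im, Complex.ofReal_re,
    Complex.ofReal_im]
  nlinarith [mul_pos hu hz]

theorem IsPreconnected.pos_of_forall_ne_zero {X : Type*} [TopologicalSpace X] {s : Set X}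
    (hs : IsPreconnected s) {g : X → ℝ} (hg : ContinuousOn g s) (hne : ∀ x ∈ s, g x ≠ 0)
    {x₀ x : X} (hx₀ : x₀ ∈ s) (hpos : 0 < g x₀) (hx : x ∈ s) : 0 < g x := by
  by_contra! h
  obtain ⟨y, hy, hy0⟩ := hs.intermediate_value hx hx₀ hg ⟨h, hpos.le⟩
  exact hne y hy hy0

namespace Polynomial

theorem norm_eval_ofReal_le_norm_eval_neg {P : ℂ[X]} (hP : ∀ z ∈ P.roots, 0 ≤ z.re) {u : ℝ}
    (hu : 0 ≤ u) : ‖P.eval (u : ℂ)‖ ≤ ‖P.eval (-u : ℂ)‖ := by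
  rw [← C_leadingCoeff_mul_prod_multiset_X_sub_C (IsAlgClosed.card_roots_eq_natDegree (p := P))]
  simp only [eval_mul, eval_C, eval_multiset_prod, Multiset.map_map, Function.comp_def, eval_sub,
    eval_X, norm_mul]
  gcongr
  rw [← normHom_apply, ← normHom_apply, map_multiset_prod, map_multiset_prod, Multiset.map_map,
    Multiset.map_map]
  refine Multiset.prod_map_le_prod_map₀ _ _ (fun _ _ => norm_nonneg (_ : ℂ)) fun z hz => ?_
  have h : -(u : ℂ) - z = -((u : ℂ) + z) := by ring
  simp only [Function.comp_apply, normHom_apply, h, norm_neg]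
  exact Complex.norm_ofReal_sub_le_norm_add hu (hP z hz)

theorem norm_eval_ofReal_mul_le {P : ℂ[X]} (hP : ∀ z ∈ P.roots, 0 ≤ z.re) {w : ℂ}
    (hw : P.IsRoot w) {u : ℝ} (hu : 0 ≤ u) :
    ‖P.eval (u : ℂ)‖ * ‖(u : ℂ) + w‖ ≤ ‖(u : ℂ) - w‖ * ‖P.eval (-u : ℂ)‖ := by
  rcases eq_or_ne P 0 with rfl | hP0
  · simp
  set Q := P /ₘ (X - C w)
  have hPQ : (X - C w) * Q = P := mul_divByMonic_eq_iff_isRoot.mpr hw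
  have hQ : ∀ z ∈ Q.roots, 0 ≤ z.re := fun z hz => hP z <| by
    rw [← hPQ, roots_mul (hPQ.symm ▸ hP0)]
    exact Multiset.mem_add.mpr (Or.inr hz)
  have hneg : -(u : ℂ) - w = -((u : ℂ) + w) := by ring
  rw [← hPQ, eval_mul, eval_mul]
  simp only [eval_sub, eval_X, eval_C, norm_mul, hneg, norm_neg]
  calc ‖(u : ℂ) - w‖ * ‖Q.eval (u : ℂ)‖ * ‖(u : ℂ) + w‖
      = ‖(u : ℂ) - w‖ * ‖(u : ℂ) + w‖ * ‖Q.eval (u : ℂ)‖ := by ring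
    _ ≤ ‖(u : ℂ) - w‖ * ‖(u : ℂ) + w‖ * ‖Q.eval (-u : ℂ)‖ := by
      gcongr; exact norm_eval_ofReal_le_norm_eval_neg hQ hu
    _ = _ := by ring

theorem sum_parity_sub_sum_parity {R : Type*} [CommRing R] (f : R[X]) {n : ℕ}
    (hn : f.natDegree ≤ n) (x : R) :
    (∑ j ∈ Finset.range (n + 1), if (n + j) % 2 = 0 then f.coeff j * x ^ j else 0) -
      (∑ j ∈ Finset.range (n + 1), if (n + j) % 2 = 1 then -f.coeff j * x ^ j else 0) =
      f.eval x := by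
  rw [eval_eq_sum_range' (Nat.lt_succ_of_le hn), ← Finset.sum_sub_distrib]
  refine Finset.sum_congr rfl fun j _ => ?_
  rcases Nat.mod_two_eq_zero_or_one (n + j) with h | h <;> simp [h]

theorem sum_parity_add_sum_parity {R : Type*} [CommRing R] (f : R[X]) {n : ℕ}
    (hn : f.natDegree ≤ n) (x : R) :
    (∑ j ∈ Finset.range (n + 1), if (n + j) % 2 = 0 then f.coeff j * x ^ j else 0) +
      (∑ j ∈ Finset.range (n + 1), if (n + j) % 2 = 1 then -f.coeff j * x ^ j else 0) =
      (-1) ^ n * f.eval (-x) := by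
  rw [eval_eq_sum_range' (Nat.lt_succ_of_le hn), ← Finset.sum_add_distrib, Finset.mul_sum]
  refine Finset.sum_congr rfl fun j _ => ?_
  rw [neg_pow x j]
  rcases Nat.mod_two_eq_zero_or_one (n + j) with h | h
  · have h1 : (-1 : R) ^ n * (-1) ^ j = 1 := by
      rw [← pow_add]; exact (Nat.even_iff.mpr h).neg_one_pow
    simp only [h, if_true, Nat.zero_ne_one, if_false]
    linear_combination (-(f.coeff j * x ^ j)) * h1
  · have h1 : (-1 : R) ^ n * (-1) ^ j = -1 := by
      rw [← pow_add]; exact (Nat.odd_iff.mpr h).neg_one_pow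
    simp only [h, if_true, Nat.one_ne_zero, if_false]
    linear_combination (-(f.coeff j * x ^ j)) * h1

theorem Monic.eval_pos_of_forall_not_isRoot {F : ℝ[X]} (hF : F.Monic) {c x : ℝ}
    (hroot : ∀ y, c < y → ¬F.IsRoot y) (hx : c < x) : 0 < F.eval x := by
  rcases Nat.eq_zero_or_pos F.natDegree with h | h
  · simp [hF.natDegree_eq_zero.mp h]
  have htop := tendsto_atTop_of_leadingCoeff_nonneg F (natDegree_pos_iff_degree_pos.mp h)
    (by simp [hF.leadingCoeff])
  obtain ⟨y, hy, hcy⟩ := ((htop.eventually_gt_atTop 0).and (eventually_gt_atTop c)).exists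
  exact isPreconnected_Ioi.pos_of_forall_ne_zero F.continuous.continuousOn hroot hcy hy hx

section RightHalfPlane

variable {f : ℝ[X]}

theorem aeval_ofReal_eq_zero {r : ℝ} (hr : f.IsRoot r) : aeval (r : ℂ) f = 0 := by
  rw [← Complex.coe_algebraMap, aeval_algebraMap_apply_eq_algebraMap_eval, hr.eq_zero, map_zero]

theorem nonneg_of_isRoot (hf : ∀ z : ℂ, aeval z f = 0 → 0 ≤ z.re) {r : ℝ}
    (hr : f.IsRoot r) : 0 ≤ r := by
  simpa using hf r (aeval_ofReal_eq_zero hr)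

theorem abs_eval_mul_le_of_aeval_eq_zero (hf : ∀ z : ℂ, aeval z f = 0 → 0 ≤ z.re)
    {w : ℂ} (hw : aeval w f = 0) {u : ℝ} (hu : 0 ≤ u) :
    |f.eval u| * ‖(u : ℂ) + w‖ ≤ ‖(u : ℂ) - w‖ * |f.eval (-u)| := by
  have heval : ∀ v : ℝ, ‖(f.map (algebraMap ℝ ℂ)).eval (v : ℂ)‖ = |f.eval v| := fun v => by
    rw [eval_map_algebraMap, ← Complex.coe_algebraMap, aeval_algebraMap_apply_eq_algebraMap_eval,
      Complex.coe_algebraMap, Complex.norm_real, Real.norm_eq_abs]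
  have h := norm_eval_ofReal_mul_le (P := f.map (algebraMap ℝ ℂ)) (w := w)
    (fun z hz => hf z ?_) ?_ hu
  · rwa [heval, ← Complex.ofReal_neg, heval] at h
  · rw [mem_roots', IsRoot, eval_map_algebraMap] at hz
    exact hz.2
  · rwa [IsRoot, eval_map_algebraMap]

theorem abs_eval_mul_le_of_isRoot (hf : ∀ z : ℂ, aeval z f = 0 → 0 ≤ z.re) {r : ℝ}
    (hr : f.IsRoot r) {u : ℝ} (hu : 0 ≤ u) :
    |f.eval u| * (u + r) ≤ |u - r| * |f.eval (-u)| := by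
  have h := abs_eval_mul_le_of_aeval_eq_zero hf (aeval_ofReal_eq_zero hr) hu
  rwa [← Complex.ofReal_add, ← Complex.ofReal_sub, Complex.norm_real, Complex.norm_real,
    Real.norm_eq_abs, Real.norm_eq_abs, abs_of_nonneg (add_nonneg hu (nonneg_of_isRoot hf hr))] at h

theorem abs_eval_lt_abs_eval_neg (hf : ∀ z : ℂ, aeval z f = 0 → 0 ≤ z.re) {w : ℂ}
    (hw : aeval w f = 0) (hw' : 0 < w.re) {u : ℝ} (hu : 0 < u) :
    |f.eval u| < |f.eval (-u)| := by
  have hle := abs_eval_mul_le_of_aeval_eq_zero hf hw hu.le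
  have hpos : 0 < |f.eval (-u)| := abs_pos.mpr fun h => by linarith [nonneg_of_isRoot hf h]
  have hlt := Complex.norm_ofReal_sub_lt_norm_add hu hw'
  refine lt_of_mul_lt_mul_right (hle.trans_lt ?_) (norm_nonneg ((u : ℂ) + w))
  rw [mul_comm]
  gcongr

theorem neg_one_pow_mul_eval_neg_pos (hmonic : f.Monic)
    (hf : ∀ z : ℂ, aeval z f = 0 → 0 ≤ z.re) {u : ℝ} (hu : 0 < u) :
    0 < (-1) ^ f.natDegree * f.eval (-u) := by
  have heval : ∀ y, ((-1) ^ f.natDegree * f.comp (-X)).eval y = (-1) ^ f.natDegree * f.eval (-y) :=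
    fun y => by simp
  rw [← heval]
  refine hmonic.neg_one_pow_natDegree_mul_comp_neg_X.eval_pos_of_forall_not_isRoot
    (fun y hy hroot => ?_) hu
  have := nonneg_of_isRoot hf (r := -y) <| by simpa [IsRoot, heval] using hroot
  linarith

theorem abs_eval_neg_eq (hmonic : f.Monic) (hf : ∀ z : ℂ, aeval z f = 0 → 0 ≤ z.re) {u : ℝ}
    (hu : 0 < u) : |f.eval (-u)| = (-1) ^ f.natDegree * f.eval (-u) := by
  rw [← abs_of_pos (neg_one_pow_mul_eval_neg_pos hmonic hf hu), abs_mul, abs_neg_one_pow, one_mul]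

end RightHalfPlane

end Polynomial

/-- `p` collects the monomials of `f` whose degree has the parity of `natDegree f`, and `-q`
the others. -/
def IsEvenOddSplitting (f : ℝ[X]) (p q : ℝ → ℝ) : Prop :=
  ∀ u, p u - q u = f.eval u ∧ p u + q u = (-1) ^ f.natDegree * f.eval (-u)

namespace IsEvenOddSplitting

variable {f : ℝ[X]} {p q : ℝ → ℝ}

theorem of_sum {n : ℕ} (hdeg : f.natDegree = n)
    (hp : ∀ x : ℝ, p x =
      ∑ j ∈ Finset.range (n + 1), if (n + j) % 2 = 0 then f.coeff j * x ^ j else 0)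
    (hq : ∀ x : ℝ, q x =
      ∑ j ∈ Finset.range (n + 1), if (n + j) % 2 = 1 then -(f.coeff j) * x ^ j else 0) :
    IsEvenOddSplitting f p q := fun u => by
  subst hdeg
  rw [hp, hq]
  exact ⟨sum_parity_sub_sum_parity f le_rfl u, sum_parity_add_sum_parity f le_rfl u⟩

theorem continuous (hs : IsEvenOddSplitting f p q) : Continuous p ∧ Continuous q := by
  have hp : p = fun u => (f.eval u + (-1) ^ f.natDegree * f.eval (-u)) / 2 :=
    funext fun u => by linarith [hs u]
  have hq : q = fun u => ((-1) ^ f.natDegree * f.eval (-u) - f.eval u) / 2 :=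
    funext fun u => by linarith [hs u]
  rw [hp, hq]
  exact ⟨by fun_prop, by fun_prop⟩

theorem eq_of_isRoot (hs : IsEvenOddSplitting f p q) {r : ℝ} (hr : f.IsRoot r) : p r = q r := by
  linarith [(hs r).1, hr.eq_zero]

theorem pos (hs : IsEvenOddSplitting f p q) (hmonic : f.Monic)
    (hf : ∀ z : ℂ, aeval z f = 0 → 0 ≤ z.re) {w : ℂ} (hw : aeval w f = 0) (hw' : 0 < w.re)
    {u : ℝ} (hu : 0 < u) : 0 < p u ∧ 0 < q u := by
  have h := abs_lt.mp
    ((abs_eval_lt_abs_eval_neg hf hw hw' hu).trans_eq (abs_eval_neg_eq hmonic hf hu))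
  constructor <;> linarith [hs u]

theorem mul_sub_le_of_isRoot (hs : IsEvenOddSplitting f p q) (hmonic : f.Monic)
    (hf : ∀ z : ℂ, aeval z f = 0 → 0 ≤ z.re) {r : ℝ} (hr : f.IsRoot r) {u : ℝ} (hu : 0 < u) :
    (u + r) * (p u - q u) ≤ |u - r| * (p u + q u) := by
  rw [(hs u).1, (hs u).2, ← abs_eval_neg_eq hmonic hf hu, mul_comm]
  exact (mul_le_mul_of_nonneg_right (le_abs_self _) (by linarith [nonneg_of_isRoot hf hr])).trans
    (abs_eval_mul_le_of_isRoot hf hr hu.le)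

theorem mul_le_mul_of_le_isRoot (hs : IsEvenOddSplitting f p q) (hmonic : f.Monic)
    (hf : ∀ z : ℂ, aeval z f = 0 → 0 ≤ z.re) {r : ℝ} (hr : f.IsRoot r) {u : ℝ} (hu : 0 < u)
    (hur : u ≤ r) : u * p u ≤ r * q u := by
  have h := hs.mul_sub_le_of_isRoot hmonic hf hr hu
  rw [abs_of_nonpos (sub_nonpos.mpr hur)] at h
  linarith

theorem mul_le_mul_of_isRoot_le (hs : IsEvenOddSplitting f p q) (hmonic : f.Monic)
    (hf : ∀ z : ℂ, aeval z f = 0 → 0 ≤ z.re) {r : ℝ} (hr : f.IsRoot r) {u : ℝ} (hu : 0 < u)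
    (hru : r ≤ u) : r * p u ≤ u * q u := by
  have h := hs.mul_sub_le_of_isRoot hmonic hf hr hu
  rw [abs_of_nonneg (sub_nonneg.mpr hru)] at h
  linarith

end IsEvenOddSplitting

theorem monotone_and_tendsto_of_orbit {α : Type*} [ConditionallyCompleteLinearOrder α]
    [TopologicalSpace α] [OrderTopology α] {T : α → α} {u : ℕ → α} {b : α}
    (hrec : ∀ t, u (t + 1) = T (u t)) (hle : u 0 ≤ b)
    (hmaps : ∀ c ∈ Icc (u 0) b, c ≤ T c ∧ T c ≤ b)
    (hcont : ∀ c ∈ Ico (u 0) b, ContinuousAt T c) (hfix : ∀ c ∈ Ico (u 0) b, T c ≠ c) :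
    Monotone u ∧ (∀ t, u t ∈ Icc (u 0) b) ∧ Tendsto u atTop (𝓝 b) := by
  have hmem : ∀ t, u t ∈ Icc (u 0) b := by
    intro t
    induction t with
    | zero => exact ⟨le_rfl, hle⟩
    | succ t ih => rw [hrec]; exact ⟨ih.1.trans (hmaps _ ih).1, (hmaps _ ih).2⟩
  have hmono : Monotone u := monotone_nat_of_le_succ fun t => hrec t ▸ (hmaps _ (hmem t)).1
  have hbdd : BddAbove (range u) := ⟨b, forall_mem_range.mpr fun t => (hmem t).2⟩
  have hlim := tendsto_atTop_ciSup hmono hbdd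
  refine ⟨hmono, hmem, ?_⟩
  convert hlim using 2
  by_contra hne
  have hL : ⨆ t, u t ∈ Ico (u 0) b :=
    ⟨le_ciSup hbdd 0, lt_of_le_of_ne (ciSup_le fun t => (hmem t).2) (Ne.symm hne)⟩
  have hshift : Tendsto (fun t => T (u t)) atTop (𝓝 (⨆ t, u t)) := by
    simpa only [Function.comp_def, hrec] using hlim.comp (tendsto_add_atTop_nat 1)
  exact hfix _ hL (tendsto_nhds_unique ((hcont _ hL).tendsto.comp hlim) hshift)

theorem monotone_and_tendsto_mul_div_orbit {p q : ℝ → ℝ} {b x₀ : ℝ} (hx₀ : 0 < x₀) (hx₀b : x₀ ≤ b)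
    (hpc : Continuous p) (hqc : Continuous q) (hq0 : ∀ c, 0 < c → 0 < q c)
    (hqp : ∀ c ∈ Ico x₀ b, q c < p c) (hb : p b = q b)
    (hkey : ∀ c ∈ Ico x₀ b, c * p c ≤ b * q c) {x : ℕ → ℝ} (hx0 : x 0 = x₀)
    (hrec : ∀ t, x (t + 1) = x t * p (x t) / q (x t)) :
    Monotone x ∧ (∀ t, x t ∈ Icc x₀ b) ∧ Tendsto x atTop (𝓝 b) := by
  subst hx0
  refine monotone_and_tendsto_of_orbit (T := fun c => c * p c / q c) hrec hx₀b (fun c hc => ?_)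
    (fun c hc => ?_) (fun c hc hfix => ?_)
  · have hc0 : 0 < c := hx₀.trans_le hc.1
    rcases hc.2.lt_or_eq with hcb | rfl
    · rw [le_div_iff₀ (hq0 c hc0), div_le_iff₀ (hq0 c hc0)]
      exact ⟨by nlinarith [hqp c ⟨hc.1, hcb⟩], hkey c ⟨hc.1, hcb⟩⟩
    · rw [hb, mul_div_cancel_right₀ _ (hq0 c hc0).ne']
      exact ⟨le_rfl, le_rfl⟩
  · exact (continuousAt_id.mul hpc.continuousAt).div hqc.continuousAt
      (hq0 c (hx₀.trans_le hc.1)).ne'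
  · have hc0 : 0 < c := hx₀.trans_le hc.1
    rw [div_eq_iff (hq0 c hc0).ne', mul_right_inj' hc0.ne'] at hfix
    exact (hqp c hc).ne' hfix

theorem antitone_and_tendsto_mul_div_orbit {p q : ℝ → ℝ} {a x₀ : ℝ} (ha : 0 ≤ a) (hax₀ : a ≤ x₀)
    (hpc : Continuous p) (hqc : Continuous q) (hp0 : ∀ c, 0 < c → 0 < p c)
    (hqp : ∀ c ∈ Ioc a x₀, q c < p c) (ha' : a = 0 ∨ p a = q a)
    (hkey : ∀ c ∈ Ioc a x₀, a * p c ≤ c * q c) {y : ℕ → ℝ} (hy0 : y 0 = x₀)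
    (hrec : ∀ t, y (t + 1) = y t * q (y t) / p (y t)) :
    Antitone y ∧ (∀ t, y t ∈ Icc a x₀) ∧ Tendsto y atTop (𝓝 a) := by
  subst hy0
  set T : ℝ → ℝ := fun c => c * q c / p c
  have hmaps : ∀ c ∈ Icc a (y 0), T c ≤ c ∧ a ≤ T c := by
    intro c hc
    rcases hc.1.lt_or_eq with hac | rfl
    · have hc0 : 0 < c := ha.trans_lt hac
      rw [div_le_iff₀ (hp0 c hc0), le_div_iff₀ (hp0 c hc0)]
      exact ⟨by nlinarith [hqp c ⟨hac, hc.2⟩], hkey c ⟨hac, hc.2⟩⟩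
    rcases ha.lt_or_eq with ha0 | rfl
    · have hpq : p a = q a := ha'.resolve_left ha0.ne'
      have hTa : T a = a := by
        simp only [T, ← hpq]; exact mul_div_cancel_right₀ _ (hp0 a ha0).ne'
      exact ⟨hTa.le, hTa.ge⟩
    · simp [T]
  have hcont : ∀ c ∈ Ioc a (y 0), ContinuousAt T c := fun c hc =>
    (continuousAt_id.mul hqc.continuousAt).div hpc.continuousAt (hp0 c (ha.trans_lt hc.1)).ne'
  have hfix : ∀ c ∈ Ioc a (y 0), T c ≠ c := fun c hc hfix => by
    have hc0 : 0 < c := ha.trans_lt hc.1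
    rw [div_eq_iff (hp0 c hc0).ne', mul_right_inj' hc0.ne'] at hfix
    exact (hqp c hc).ne hfix
  -- the decreasing orbit is an increasing one in `ℝᵒᵈ`
  have hT := monotone_and_tendsto_of_orbit (u := fun t => toDual (y t)) (b := toDual a)
    (T := fun c => toDual (T (ofDual c))) hrec hax₀ (fun c hc => hmaps (ofDual c) ⟨hc.2, hc.1⟩)
    (fun c hc => hcont (ofDual c) ⟨hc.2, hc.1⟩) (fun c hc => hfix (ofDual c) ⟨hc.2, hc.1⟩)
  exact ⟨monotone_toDual_comp_iff.mp hT.1, fun t => ⟨(hT.2.1 t).2, (hT.2.1 t).1⟩, hT.2.2⟩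

theorem stmt9_general (f : Polynomial ℝ) (n : ℕ) (hmonic : f.Monic) (hdeg : f.natDegree = n)
    (has1 : ∀ z : ℂ, (Polynomial.aeval z) f = 0 → 0 ≤ z.re)
    (has2 : ∃ z : ℂ, (Polynomial.aeval z) f = 0 ∧ 0 < z.re)
    (p q : ℝ → ℝ)
    (hp : ∀ x : ℝ, p x =
      ∑ j ∈ Finset.range (n + 1), if (n + j) % 2 = 0 then f.coeff j * x ^ j else 0)
    (hq : ∀ x : ℝ, q x =
      ∑ j ∈ Finset.range (n + 1), if (n + j) % 2 = 1 then -(f.coeff j) * x ^ j else 0)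
    (a b x₀ : ℝ) (hax₀ : a < x₀) (hx₀b : x₀ < b)
    (ha : a = 0 ∨ f.IsRoot a) (hb : f.IsRoot b)
    (hnoroot : ∀ x : ℝ, a < x → x < b → ¬ f.IsRoot x)
    (hpq : q x₀ < p x₀)
    (x y : ℕ → ℝ) (hx0 : x 0 = x₀) (hy0 : y 0 = x₀)
    (hxrec : ∀ t : ℕ, x (t + 1) = x t * p (x t) / q (x t))
    (hyrec : ∀ t : ℕ, y (t + 1) = y t * q (y t) / p (y t)) :
    (Monotone x ∧ (∀ t, x t ∈ Set.Icc x₀ b) ∧ Tendsto x atTop (nhds b)) ∧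
    (Antitone y ∧ (∀ t, y t ∈ Set.Icc a x₀) ∧ Tendsto y atTop (nhds a)) := by
  have hs : IsEvenOddSplitting f p q := .of_sum hdeg hp hq
  obtain ⟨hpc, hqc⟩ := hs.continuous
  obtain ⟨w, hw, hw'⟩ := has2
  have hpos : ∀ u, 0 < u → 0 < p u ∧ 0 < q u := fun u hu => hs.pos hmonic has1 hw hw' hu
  have ha0 : 0 ≤ a := ha.elim (fun h => h.ge) (nonneg_of_isRoot has1)
  have hx₀pos : 0 < x₀ := ha0.trans_lt hax₀
  have hqp : ∀ c ∈ Ioo a b, q c < p c := fun c hc => by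
    rw [← sub_pos, (hs c).1]
    exact isPreconnected_Ioo.pos_of_forall_ne_zero f.continuous.continuousOn
      (fun c hc => hnoroot c hc.1 hc.2) ⟨hax₀, hx₀b⟩ ((hs x₀).1 ▸ sub_pos.2 hpq) hc
  constructor
  · exact monotone_and_tendsto_mul_div_orbit hx₀pos hx₀b.le hpc hqc (fun c hc => (hpos c hc).2)
      (fun c hc => hqp c ⟨hax₀.trans_le hc.1, hc.2⟩) (hs.eq_of_isRoot hb)
      (fun c hc => hs.mul_le_mul_of_le_isRoot hmonic has1 hb (hx₀pos.trans_le hc.1) hc.2.le)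
      hx0 hxrec
  · refine antitone_and_tendsto_mul_div_orbit ha0 hax₀.le hpc hqc (fun c hc => (hpos c hc).1)
      (fun c hc => hqp c ⟨hc.1, hc.2.trans_lt hx₀b⟩) (ha.imp_right hs.eq_of_isRoot)
      (fun c hc => ?_) hy0 hyrec
    have hc0 : 0 < c := ha0.trans_lt hc.1
    rcases ha with rfl | har
    · simpa using (mul_pos hc0 (hpos c hc0).2).le
    · exact hs.mul_le_mul_of_isRoot_le hmonic has1 har hc0 hc.1.le

/-- Let `f` be a monic real polynomial of degree `n ≥ 1` satisfying
Assumption 1, with even/odd splitting `f = p - q`. Let `a < x₀ < b` with `a` either `0`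
or a real root of `f`, `b` a real root of `f`, no real root of `f` in `(a, b)`, and
`p x₀ > q x₀`. Define `x 0 = y 0 = x₀`, `x (t+1) = x t * p (x t) / q (x t)` and
`y (t+1) = y t * q (y t) / p (y t)`. Then `x` is nondecreasing, remains in `[x₀, b]`,
and converges to `b`, while `y` is nonincreasing, remains in `[a, x₀]`, and converges
to `a`. -/
theorem stmt9 (f : Polynomial ℝ) (n : ℕ) (hn : 1 ≤ n)
    (hmonic : f.Monic) (hdeg : f.natDegree = n)
    (has1 : ∀ z : ℂ, (Polynomial.aeval z) f = 0 → 0 ≤ z.re)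
    (has2 : ∃ z : ℂ, (Polynomial.aeval z) f = 0 ∧ 0 < z.re)
    (p q : ℝ → ℝ)
    (hp : ∀ x : ℝ, p x =
      ∑ j ∈ Finset.range (n + 1), if (n + j) % 2 = 0 then f.coeff j * x ^ j else 0)
    (hq : ∀ x : ℝ, q x =
      ∑ j ∈ Finset.range (n + 1), if (n + j) % 2 = 1 then -(f.coeff j) * x ^ j else 0)
    (a b x₀ : ℝ) (hax₀ : a < x₀) (hx₀b : x₀ < b)
    (ha : a = 0 ∨ f.IsRoot a) (hb : f.IsRoot b)
    (hnoroot : ∀ x : ℝ, a < x → x < b → ¬ f.IsRoot x)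
    (hpq : q x₀ < p x₀)
    (x y : ℕ → ℝ) (hx0 : x 0 = x₀) (hy0 : y 0 = x₀)
    (hxrec : ∀ t : ℕ, x (t + 1) = x t * p (x t) / q (x t))
    (hyrec : ∀ t : ℕ, y (t + 1) = y t * q (y t) / p (y t)) :
    (Monotone x ∧ (∀ t, x t ∈ Set.Icc x₀ b) ∧ Tendsto x atTop (nhds b)) ∧
    (Antitone y ∧ (∀ t, y t ∈ Set.Icc a x₀) ∧ Tendsto y atTop (nhds a)) :=
  stmt9_general f n hmonic hdeg has1 has2 p q hp hq a b x₀ hax₀ hx₀b ha hb hnoroot hpq x y hx0 hy0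
    hxrec hyrec
end

section
/- Let f be a monic real polynomial of degree n ≥ 1 satisfying Assumption 1, with even/odd splitting f = p − q, and let α > 0 be a simple real root of f with f'(α) < 0 (equivalently q'(α) > p'(α)). Then there exist δ > 0 and ℓ ∈ [0, 1) such that for every x₀ with α − δ < x₀ < α, the sequence defined by x_{t+1} = x_t · p(x_t)/q(x_t) satisfies 0 ≤ α − x_{t+1} ≤ ℓ · (α − x_t) for all t ≥ 0; in particular x_t converges to α at a linear rate. -/
/-!
The iteration map is `G(x) = x p(x) / q(x) = x (1 + f(x) / q(x))`. It fixes `α`, with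
`G'(α) = 1 + α f'(α) / q(α)` and `q(α) = (-1)^n f(-α) / 2`. Writing `f = (X - α) g`, the bound
`0 < G'(α) < 1` reduces to `|g(α)| < |g(-α)|`: each root of `g` lies in the closed right
half-plane, hence is no farther from `α` than from `-α`, and since `g(α) = f'(α) < 0` the monic `g`
has a real root beyond `α`, which is strictly closer. A fixed point with derivative in `(0, 1)`
attracts the iteration from the left, monotonically and at a linear rate.
-/

open Filter Polynomial Topology

theorem Complex.norm_ofReal_sub_sq_add (a : ℝ) (z : ℂ) :
    ‖(a : ℂ) - z‖ ^ 2 + 4 * a * z.re = ‖(a : ℂ) + z‖ ^ 2 := by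
  simp only [Complex.sq_norm, Complex.normSq_apply, Complex.sub_re, Complex.sub_im,
    Complex.add_re, Complex.add_im, Complex.ofReal_re, Complex.ofReal_im]
  ring

theorem Multiset.prod_map_lt_prod_map_of_pos {ι : Type*} {s : Multiset ι} {f g : ι → ℝ}
    (hf : ∀ i ∈ s, 0 ≤ f i) (hfg : ∀ i ∈ s, f i ≤ g i) (hg : ∀ i ∈ s, 0 < g i)
    {j : ι} (hj : j ∈ s) (hlt : f j < g j) : (s.map f).prod < (s.map g).prod := by
  classical
  rw [← Multiset.cons_erase hj, Multiset.map_cons, Multiset.map_cons, Multiset.prod_cons,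
    Multiset.prod_cons]
  have hmem : ∀ i ∈ s.erase j, i ∈ s := fun i hi => Multiset.mem_of_mem_erase hi
  calc f j * ((s.erase j).map f).prod ≤ f j * ((s.erase j).map g).prod :=
        mul_le_mul_of_nonneg_left (Multiset.prod_map_le_prod_map₀ f g
          (fun i hi => hf i (hmem i hi)) fun i hi => hfg i (hmem i hi)) (hf j hj)
    _ < g j * ((s.erase j).map g).prod :=
        mul_lt_mul_of_pos_right hlt (Multiset.prod_pos fun x hx => by
          obtain ⟨i, hi, rfl⟩ := Multiset.mem_map.1 hx
          exact hg i (hmem i hi))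

namespace Polynomial

theorem exists_isRoot_gt_of_eval_neg {P : ℝ[X]} (hP : 0 < P.leadingCoeff) {a : ℝ}
    (ha : P.eval a < 0) : ∃ r, a < r ∧ P.IsRoot r := by
  have hdeg : 0 < P.degree := by
    by_contra! h
    rw [eq_C_of_degree_le_zero h, eval_C] at ha
    rw [eq_C_of_degree_le_zero h, leadingCoeff_C] at hP
    linarith
  obtain ⟨b, hb, hab⟩ := ((P.tendsto_atTop_of_leadingCoeff_nonneg hdeg hP.le).eventually_ge_atTop 0
    |>.and (eventually_gt_atTop a)).exists
  obtain ⟨r, hr, hPr⟩ := intermediate_value_Ioc hab.le P.continuous.continuousOn ⟨ha, hb⟩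
  exact ⟨r, hr.1, hPr⟩

theorem eval_pos_of_forall_isRoot_lt {P : ℝ[X]} (hP : 0 < P.leadingCoeff) {a : ℝ}
    (h : ∀ r, P.IsRoot r → r < a) : 0 < P.eval a := by
  by_contra! ha
  rcases ha.lt_or_eq with ha | ha
  · obtain ⟨r, har, hr⟩ := exists_isRoot_gt_of_eval_neg hP ha
    exact (h r hr).not_gt har
  · exact (h a ha).false

theorem neg_one_pow_natDegree_mul_eval_neg_pos_s11 {g : ℝ[X]} (hg : g.Monic)
    (hroots : ∀ r, g.IsRoot r → 0 ≤ r) {a : ℝ} (ha : 0 < a) :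
    0 < (-1) ^ g.natDegree * g.eval (-a) := by
  have hP := hg.neg_one_pow_natDegree_mul_comp_neg_X
  have := eval_pos_of_forall_isRoot_lt (hP.leadingCoeff ▸ one_pos) (a := a) fun r hr => by
    have : g.IsRoot (-r) := by simpa [IsRoot] using hr
    linarith [hroots _ this]
  simpa using this

theorem aeval_complex_ofReal (g : ℝ[X]) (x : ℝ) : aeval (x : ℂ) g = g.eval x :=
  aeval_ofReal (K := ℂ) g x

theorem abs_eval_eq_prod_aroots (g : ℝ[X]) (x : ℝ) :
    |g.eval x| = |g.leadingCoeff| * ((g.aroots ℂ).map fun z => ‖(x : ℂ) - z‖).prod := by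
  have h := (IsAlgClosed.splits (g.map (algebraMap ℝ ℂ))).aeval_eq_prod_aroots (x : ℂ)
  have hprod (s : Multiset ℂ) : ‖s.prod‖ = (s.map norm).prod := map_multiset_prod normHom s
  rw [aeval_complex_ofReal] at h
  simpa [hprod, Multiset.map_map] using congrArg norm h

theorem abs_eval_lt_abs_eval_neg_s11 {g : ℝ[X]} (hg : g ≠ 0)
    (hroots : ∀ z : ℂ, aeval z g = 0 → 0 ≤ z.re) {w : ℂ} (hw : aeval w g = 0)
    (hw_re : 0 < w.re) {a : ℝ} (ha : 0 < a) : |g.eval a| < |g.eval (-a)| := by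
  have hnorm : ∀ z : ℂ, ‖((-a : ℝ) : ℂ) - z‖ = ‖(a : ℂ) + z‖ := fun z => by
    rw [← norm_neg]; push_cast; ring_nf
  rw [abs_eval_eq_prod_aroots, abs_eval_eq_prod_aroots]
  simp only [hnorm]
  refine mul_lt_mul_of_pos_left ?_ (abs_pos.2 (leadingCoeff_ne_zero.2 hg))
  have hre : ∀ z ∈ g.aroots ℂ, 0 ≤ z.re := fun z hz => hroots z (mem_aroots.1 hz).2
  refine Multiset.prod_map_lt_prod_map_of_pos (fun _ _ => norm_nonneg _) (fun z hz => ?_)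
    (fun z hz => ?_) (mem_aroots.2 ⟨hg, hw⟩) ?_
  · rw [← pow_le_pow_iff_left₀ (norm_nonneg _) (norm_nonneg _) two_ne_zero,
      ← Complex.norm_ofReal_sub_sq_add]
    nlinarith [hre z hz]
  · calc (0 : ℝ) < a + z.re := by linarith [hre z hz]
      _ ≤ ‖(a : ℂ) + z‖ := by simpa using Complex.re_le_norm ((a : ℂ) + z)
  · rw [← sq_lt_sq₀ (norm_nonneg _) (norm_nonneg _), ← Complex.norm_ofReal_sub_sq_add]
    nlinarith

theorem two_mul_mul_abs_derivative_lt_neg_one_pow_mul_eval_neg {f : ℝ[X]} (hf : f.Monic)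
    (hroots : ∀ z : ℂ, aeval z f = 0 → 0 ≤ z.re) {α : ℝ} (hα : 0 < α) (hroot : f.IsRoot α)
    (hderiv : f.derivative.eval α < 0) :
    2 * α * |f.derivative.eval α| < (-1) ^ f.natDegree * f.eval (-α) := by
  set g := f /ₘ (X - C α)
  have hfg : (X - C α) * g = f := mul_divByMonic_eq_iff_isRoot.2 hroot
  have hg : g.Monic := (monic_X_sub_C α).of_mul_monic_left (hfg ▸ hf)
  have hgroots (z : ℂ) (hz : aeval z g = 0) : 0 ≤ z.re :=
    hroots z (by rw [← hfg, map_mul, hz, mul_zero])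
  have hgα : g.eval α = f.derivative.eval α := by rw [← hfg]; simp
  obtain ⟨r, hαr, hr⟩ := exists_isRoot_gt_of_eval_neg (hg.leadingCoeff ▸ one_pos) (hgα ▸ hderiv)
  have hreal (s : ℝ) (hs : g.IsRoot s) : 0 ≤ s := by
    simpa using hgroots s (by rw [aeval_complex_ofReal, hs.eq_zero, Complex.ofReal_zero])
  have hpos := neg_one_pow_natDegree_mul_eval_neg_pos_s11 hg hreal hα
  have hlt := abs_eval_lt_abs_eval_neg_s11 hg.ne_zero hgroots (w := r)
    (by rw [aeval_complex_ofReal, hr.eq_zero, Complex.ofReal_zero])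
    (by rw [Complex.ofReal_re]; linarith) hα
  have habs : |g.eval (-α)| = (-1) ^ g.natDegree * g.eval (-α) := by
    rw [← abs_of_pos hpos, abs_mul, abs_pow, abs_neg, abs_one, one_pow, one_mul]
  rw [← hgα, ← hfg, (monic_X_sub_C α).natDegree_mul hg, natDegree_X_sub_C, eval_mul]
  simp only [eval_sub, eval_X, eval_C, pow_add, pow_one]
  linarith [mul_lt_mul_of_pos_left (habs ▸ hlt) hα]

theorem neg_one_pow_mul_eval_neg_eq_sum {f : ℝ[X]} {n : ℕ} (hf : f.natDegree ≤ n) (x : ℝ) :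
    (-1) ^ n * f.eval (-x) =
      ∑ j ∈ Finset.range (n + 1), (-1) ^ (n + j) * (f.coeff j * x ^ j) := by
  rw [eval_eq_sum_range' (Nat.lt_succ_of_le hf), Finset.mul_sum]
  refine Finset.sum_congr rfl fun j _ => ?_
  rw [neg_pow, pow_add]
  ring

theorem sum_range_even_part_eq {f : ℝ[X]} {n : ℕ} (hf : f.natDegree ≤ n) (x : ℝ) :
    ∑ j ∈ Finset.range (n + 1), (if (n + j) % 2 = 0 then f.coeff j * x ^ j else 0) =
      ((-1) ^ n * f.eval (-x) + f.eval x) / 2 := by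
  rw [neg_one_pow_mul_eval_neg_eq_sum hf, eval_eq_sum_range' (Nat.lt_succ_of_le hf),
    ← Finset.sum_add_distrib, Finset.sum_div]
  refine Finset.sum_congr rfl fun j _ => ?_
  rcases Nat.even_or_odd (n + j) with h | h
  · simp [Nat.even_iff.1 h, h.neg_one_pow]
  · simp [Nat.odd_iff.1 h, h.neg_one_pow]

theorem sum_range_odd_part_eq {f : ℝ[X]} {n : ℕ} (hf : f.natDegree ≤ n) (x : ℝ) :
    ∑ j ∈ Finset.range (n + 1), (if (n + j) % 2 = 1 then -f.coeff j * x ^ j else 0) =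
      ((-1) ^ n * f.eval (-x) - f.eval x) / 2 := by
  rw [neg_one_pow_mul_eval_neg_eq_sum hf, eval_eq_sum_range' (Nat.lt_succ_of_le hf),
    ← Finset.sum_sub_distrib, Finset.sum_div]
  refine Finset.sum_congr rfl fun j _ => ?_
  rcases Nat.even_or_odd (n + j) with h | h
  · simp [Nat.even_iff.1 h, h.neg_one_pow]
  · simp only [Nat.odd_iff.1 h, ↓reduceIte, neg_mul, h.neg_one_pow, one_mul]
    ring

end Polynomial

theorem hasDerivAt_mul_add_div_of_eq_zero {Q F : ℝ → ℝ} {F' α : ℝ}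
    (hQ : DifferentiableAt ℝ Q α) (hF : HasDerivAt F F' α) (hFα : F α = 0) (hQα : Q α ≠ 0) :
    HasDerivAt (fun y => y * (Q y + F y) / Q y) (1 + α * F' / Q α) α := by
  refine (((hasDerivAt_id α).mul (hQ.hasDerivAt.add hF)).div hQ.hasDerivAt hQα).congr_deriv ?_
  simp only [Pi.add_apply, Pi.mul_apply, id, hFα, add_zero]
  field_simp
  ring

theorem exists_contraction_left_of_hasDerivAt {G : ℝ → ℝ} {L α : ℝ} (hG : HasDerivAt G L α)
    (hGα : G α = α) (hL0 : 0 < L) (hL1 : L < 1) :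
    ∃ δ > 0, ∃ ℓ : ℝ, 0 ≤ ℓ ∧ ℓ < 1 ∧
      ∀ y, α - δ < y → y ≤ α → 0 ≤ α - G y ∧ α - G y ≤ ℓ * (α - y) := by
  have hslope : ∀ᶠ y in 𝓝[<] α, slope G α y ∈ Set.Ioo 0 ((1 + L) / 2) :=
    ((hasDerivAt_iff_tendsto_slope.1 hG).mono_left (nhdsLT_le_nhdsNE α)).eventually
      (Ioo_mem_nhds hL0 (by linarith))
  obtain ⟨l, hl, hsub⟩ := mem_nhdsLT_iff_exists_Ioo_subset.1 hslope
  refine ⟨α - l, by linarith [Set.mem_Iio.1 hl], (1 + L) / 2, by linarith, by linarith,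
    fun y hy hyα => ?_⟩
  rcases hyα.lt_or_eq with hyα | rfl
  · obtain ⟨hs0, hs1⟩ := hsub ⟨by linarith, hyα⟩
    have hGy : α - G y = slope G α y * (α - y) := by
      rw [slope_def_field, hGα]
      field_simp [sub_ne_zero.2 hyα.ne]
      ring
    rw [hGy]
    exact ⟨by nlinarith, mul_le_mul_of_nonneg_right hs1.le (by linarith)⟩
  · simp [hGα]

theorem tendsto_of_contraction_left {G : ℝ → ℝ} {α δ ℓ : ℝ} (hℓ0 : 0 ≤ ℓ) (hℓ1 : ℓ < 1)
    (hG : ∀ y, α - δ < y → y ≤ α → 0 ≤ α - G y ∧ α - G y ≤ ℓ * (α - y))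
    {x : ℕ → ℝ} (hx0 : α - δ < x 0) (hx0α : x 0 ≤ α) (hx : ∀ t, x (t + 1) = G (x t)) :
    (∀ t, 0 ≤ α - x (t + 1) ∧ α - x (t + 1) ≤ ℓ * (α - x t)) ∧ Tendsto x atTop (𝓝 α) := by
  have hmem : ∀ t, α - δ < x t ∧ x t ≤ α := by
    intro t
    induction t with
    | zero => exact ⟨hx0, hx0α⟩
    | succ t ih =>
      obtain ⟨h0, h1⟩ := hG _ ih.1 ih.2
      rw [hx]
      constructor <;> nlinarith
  have hstep t : 0 ≤ α - x (t + 1) ∧ α - x (t + 1) ≤ ℓ * (α - x t) :=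
    hx t ▸ hG _ (hmem t).1 (hmem t).2
  have hgeom t : α - x t ≤ ℓ ^ t * (α - x 0) := by
    induction t with
    | zero => simp
    | succ t ih => rw [pow_succ']; nlinarith [(hstep t).2]
  refine ⟨hstep, ?_⟩
  have herr : Tendsto (fun t => α - x t) atTop (𝓝 0) :=
    squeeze_zero (fun t => by linarith [(hmem t).2]) hgeom
      (by simpa using (tendsto_pow_atTop_nhds_zero_of_lt_one hℓ0 hℓ1).mul_const (α - x 0))
  simpa using tendsto_const_nhds.sub herr (a := α)

theorem stmt11_general (f : Polynomial ℝ) (n : ℕ)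
    (hmonic : f.Monic) (hdeg : f.natDegree = n)
    (has1 : ∀ z : ℂ, (Polynomial.aeval z) f = 0 → 0 ≤ z.re)
    (p q : ℝ → ℝ)
    (hp : ∀ x : ℝ, p x =
      ∑ j ∈ Finset.range (n + 1), if (n + j) % 2 = 0 then f.coeff j * x ^ j else 0)
    (hq : ∀ x : ℝ, q x =
      ∑ j ∈ Finset.range (n + 1), if (n + j) % 2 = 1 then -(f.coeff j) * x ^ j else 0)
    (α : ℝ) (hα : 0 < α) (hroot : f.IsRoot α)
    (hderiv : (Polynomial.derivative f).eval α < 0) :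
    ∃ δ > (0 : ℝ), ∃ ℓ : ℝ, 0 ≤ ℓ ∧ ℓ < 1 ∧
      ∀ x₀ : ℝ, α - δ < x₀ → x₀ < α →
        ∀ x : ℕ → ℝ, x 0 = x₀ →
          (∀ t : ℕ, x (t + 1) = x t * p (x t) / q (x t)) →
          (∀ t : ℕ, 0 ≤ α - x (t + 1) ∧ α - x (t + 1) ≤ ℓ * (α - x t)) ∧
            Tendsto x atTop (nhds α) := by
  have hq' (x : ℝ) : q x = ((-1) ^ n * f.eval (-x) - f.eval x) / 2 := by
    rw [hq, sum_range_odd_part_eq hdeg.le]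
  have hpq (x : ℝ) : p x = q x + f.eval x := by
    rw [hp, hq', sum_range_even_part_eq hdeg.le]; ring
  have hqα : 2 * α * |f.derivative.eval α| < 2 * q α := by
    rw [hq', hroot.eq_zero, sub_zero, ← hdeg]
    linarith [two_mul_mul_abs_derivative_lt_neg_one_pow_mul_eval_neg hmonic has1 hα hroot hderiv]
  have hqα_pos : 0 < q α := by nlinarith [abs_nonneg (f.derivative.eval α)]
  have hG : HasDerivAt (fun y => y * p y / q y) (1 + α * f.derivative.eval α / q α) α := by
    simp only [hpq]
    exact hasDerivAt_mul_add_div_of_eq_zero (by rw [funext hq']; fun_prop) (f.hasDerivAt α)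
      hroot.eq_zero hqα_pos.ne'
  have hGα : α * p α / q α = α := by
    rw [hpq, hroot.eq_zero, add_zero, mul_div_assoc, div_self hqα_pos.ne', mul_one]
  have hL0 : 0 < 1 + α * f.derivative.eval α / q α := by
    rw [one_add_div hqα_pos.ne']
    exact div_pos (by nlinarith [neg_abs_le (f.derivative.eval α)]) hqα_pos
  have hL1 : 1 + α * f.derivative.eval α / q α < 1 := by
    linarith [div_neg_of_neg_of_pos (mul_neg_of_pos_of_neg hα hderiv) hqα_pos]
  obtain ⟨δ, hδ, ℓ, hℓ0, hℓ1, hcontr⟩ := exists_contraction_left_of_hasDerivAt hG hGα hL0 hL1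
  exact ⟨δ, hδ, ℓ, hℓ0, hℓ1, fun x₀ h₀ h₀α x hx0 hx =>
    tendsto_of_contraction_left hℓ0 hℓ1 hcontr (hx0 ▸ h₀) (hx0 ▸ h₀α.le) hx⟩

/-- Let `f` be a monic real polynomial of degree `n ≥ 1` satisfying
Assumption 1, with even/odd splitting `f = p - q`, and let `α > 0` be a simple real root
of `f` with `f'(α) < 0`. Then there exist `δ > 0` and `ℓ ∈ [0, 1)` such that for every
`x₀` with `α - δ < x₀ < α`, the sequence `x (t+1) = x t * p (x t) / q (x t)` started at
`x₀` satisfies `0 ≤ α - x (t+1) ≤ ℓ * (α - x t)` for all `t`; in particular it converges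
to `α` (at a linear rate). -/
theorem stmt11 (f : Polynomial ℝ) (n : ℕ) (hn : 1 ≤ n)
    (hmonic : f.Monic) (hdeg : f.natDegree = n)
    (has1 : ∀ z : ℂ, (Polynomial.aeval z) f = 0 → 0 ≤ z.re)
    (has2 : ∃ z : ℂ, (Polynomial.aeval z) f = 0 ∧ 0 < z.re)
    (p q : ℝ → ℝ)
    (hp : ∀ x : ℝ, p x =
      ∑ j ∈ Finset.range (n + 1), if (n + j) % 2 = 0 then f.coeff j * x ^ j else 0)
    (hq : ∀ x : ℝ, q x =
      ∑ j ∈ Finset.range (n + 1), if (n + j) % 2 = 1 then -(f.coeff j) * x ^ j else 0)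
    (α : ℝ) (hα : 0 < α) (hroot : f.IsRoot α)
    (hderiv : (Polynomial.derivative f).eval α < 0) :
    ∃ δ > (0 : ℝ), ∃ ℓ : ℝ, 0 ≤ ℓ ∧ ℓ < 1 ∧
      ∀ x₀ : ℝ, α - δ < x₀ → x₀ < α →
        ∀ x : ℕ → ℝ, x 0 = x₀ →
          (∀ t : ℕ, x (t + 1) = x t * p (x t) / q (x t)) →
          (∀ t : ℕ, 0 ≤ α - x (t + 1) ∧ α - x (t + 1) ≤ ℓ * (α - x t)) ∧
            Tendsto x atTop (nhds α) :=
  stmt11_general f n hmonic hdeg has1 p q hp hq α hα hroot hderiv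
end

section
/- Let f be a monic real polynomial of degree n ≥ 1 satisfying Assumption 1, with even/odd splitting f = p − q, and let α > 0 be a simple real root of f with f'(α) > 0 (equivalently p'(α) > q'(α)). Then there exist δ > 0 and ℓ ∈ [0, 1) such that for every x₀ with α < x₀ < α + δ, the sequence defined by x_{t+1} = x_t · q(x_t)/p(x_t) satisfies 0 ≤ x_{t+1} − α ≤ ℓ · (x_t − α) for all t ≥ 0; in particular x_t converges to α at a linear rate. -/
/-!
Write `f = (X - α) h`. The complex roots `w` of `h` lie in the closed right half-plane, so
`|x - w| ≤ |x + w|` for `x ≥ 0`; multiplying over the roots gives `|h(x)| ≤ H(x)`, where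
`H(x) = (-1)^(deg h) h(-x)` is positive on `(0, ∞)`. In terms of `h` and `H` the even/odd
splitting reads `2p = (x - α) h + (x + α) H` and `2q = (x + α) H - (x - α) h`, hence
`x q / p - α = (x - α) ρ(x)` with `ρ = (x + α) (H - h) / (2p) ≥ 0`. At the root
`ρ(α) = 1 - h(α) / H(α) < 1` because `h(α) = f'(α) > 0`, so by continuity `ρ` stays below
some `ℓ < 1` near `α`, and every step contracts the distance to `α` by `ℓ`.
-/

open Filter Polynomial Topology

theorem Complex.norm_sub_le_norm_add_of_re_nonneg {x : ℝ} (hx : 0 ≤ x) {w : ℂ}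
    (hw : 0 ≤ w.re) : ‖(x : ℂ) - w‖ ≤ ‖(x : ℂ) + w‖ := by
  rw [← sq_le_sq₀ (norm_nonneg _) (norm_nonneg _), Complex.sq_norm, Complex.sq_norm,
    Complex.normSq_apply, Complex.normSq_apply]
  simp only [Complex.sub_re, Complex.sub_im, Complex.add_re, Complex.add_im, Complex.ofReal_re,
    Complex.ofReal_im]
  nlinarith [mul_nonneg hx hw]

namespace Polynomial

theorem norm_eval_le_norm_eval_neg {P : ℂ[X]} (hP : ∀ w ∈ P.roots, 0 ≤ w.re) {x : ℝ}
    (hx : 0 ≤ x) : ‖P.eval (x : ℂ)‖ ≤ ‖P.eval (-x : ℂ)‖ := by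
  have hsplit := IsAlgClosed.splits P
  have norm_prod (s : Multiset ℂ) : ‖s.prod‖ = (s.map (‖·‖)).prod :=
    map_multiset_prod (normHom : ℂ →*₀ ℝ) s
  rw [hsplit.eval_eq_prod_roots, hsplit.eval_eq_prod_roots, norm_mul, norm_mul, norm_prod,
    norm_prod, Multiset.map_map, Multiset.map_map]
  refine mul_le_mul_of_nonneg_left (Multiset.prod_map_le_prod_map₀ _ _
    (fun _ _ => norm_nonneg _) fun w hw => ?_) (norm_nonneg _)
  rw [Function.comp_apply, Function.comp_apply, show -(x : ℂ) - w = -(x + w) by ring, norm_neg]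
  exact Complex.norm_sub_le_norm_add_of_re_nonneg hx (hP w hw)

theorem abs_eval_le_abs_eval_neg_s12 {h : ℝ[X]} (hroots : ∀ z : ℂ, aeval z h = 0 → 0 ≤ z.re)
    {x : ℝ} (hx : 0 ≤ x) : |h.eval x| ≤ |h.eval (-x)| := by
  have key := norm_eval_le_norm_eval_neg (P := h.map (algebraMap ℝ ℂ))
    (fun w hw => hroots w (by simpa using isRoot_of_mem_roots hw)) hx
  rwa [eval_map_algebraMap, eval_map_algebraMap, ← Complex.ofReal_neg, ← Complex.coe_algebraMap,
    aeval_algebraMap_apply_eq_algebraMap_eval, aeval_algebraMap_apply_eq_algebraMap_eval,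
    Complex.coe_algebraMap, Complex.norm_real, Complex.norm_real, Real.norm_eq_abs,
    Real.norm_eq_abs] at key

theorem eval_ne_zero_of_neg {h : ℝ[X]} (hroots : ∀ z : ℂ, aeval z h = 0 → 0 ≤ z.re) {x : ℝ}
    (hx : x < 0) : h.eval x ≠ 0 := by
  intro h0
  have := hroots x (by
    rw [← Complex.coe_algebraMap, aeval_algebraMap_apply_eq_algebraMap_eval, h0, map_zero])
  rw [Complex.ofReal_re] at this
  linarith

theorem Monic.eval_pos_of_forall_ne_zero {G : ℝ[X]} (hG : G.Monic) {a : ℝ}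
    (hroots : ∀ x, a < x → G.eval x ≠ 0) {x : ℝ} (hx : a < x) : 0 < G.eval x := by
  have hlarge : ∀ᶠ y in atTop, 0 ≤ G.eval y := by
    rcases eq_or_ne G.natDegree 0 with hdeg | hdeg
    · simp [hG.natDegree_eq_zero.mp hdeg]
    · have hpos : 0 < G.degree := natDegree_pos_iff_degree_pos.mp (Nat.pos_of_ne_zero hdeg)
      exact (G.tendsto_atTop_of_leadingCoeff_nonneg hpos
        (by simp [hG.leadingCoeff])).eventually_ge_atTop 0
  by_contra! hneg
  obtain ⟨y, hy, hy0⟩ := isPreconnected_Ioi.intermediate_value₂_eventually₁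
    (Set.mem_Ioi.mpr hx) (le_principal_iff.mpr (Ioi_mem_atTop a)) G.continuous.continuousOn
    continuousOn_const hneg hlarge
  exact hroots y hy hy0

theorem Monic.neg_one_pow_natDegree_mul_eval_neg_pos {h : ℝ[X]} (hh : h.Monic)
    (hroots : ∀ x < 0, h.eval x ≠ 0) {x : ℝ} (hx : 0 < x) :
    0 < (-1) ^ h.natDegree * h.eval (-x) := by
  simpa using hh.neg_one_pow_natDegree_mul_comp_neg_X.eval_pos_of_forall_ne_zero
    (fun y hy => by simpa using hroots (-y) (by linarith)) hx

variable {R : Type*} [CommRing R] {f : R[X]} {n : ℕ}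

theorem sum_even_sub_sum_odd_eq_eval (hf : f.natDegree ≤ n) (x : R) :
    (∑ j ∈ Finset.range (n + 1), if (n + j) % 2 = 0 then f.coeff j * x ^ j else 0) -
      (∑ j ∈ Finset.range (n + 1), if (n + j) % 2 = 1 then -(f.coeff j) * x ^ j else 0) =
      f.eval x := by
  rw [eval_eq_sum_range' (Nat.lt_succ_of_le hf), ← Finset.sum_sub_distrib]
  refine Finset.sum_congr rfl fun j _ => ?_
  rcases Nat.mod_two_eq_zero_or_one (n + j) with hj | hj <;> simp [hj]

theorem sum_even_add_sum_odd_eq_eval_neg (hf : f.natDegree ≤ n) (x : R) :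
    (∑ j ∈ Finset.range (n + 1), if (n + j) % 2 = 0 then f.coeff j * x ^ j else 0) +
      (∑ j ∈ Finset.range (n + 1), if (n + j) % 2 = 1 then -(f.coeff j) * x ^ j else 0) =
      (-1) ^ n * f.eval (-x) := by
  rw [eval_eq_sum_range' (Nat.lt_succ_of_le hf), Finset.mul_sum, ← Finset.sum_add_distrib]
  refine Finset.sum_congr rfl fun j _ => ?_
  rw [neg_pow x j, show (-1) ^ n * (f.coeff j * ((-1) ^ j * x ^ j)) =
    (-1) ^ (n + j) * (f.coeff j * x ^ j) by ring]
  rcases Nat.mod_two_eq_zero_or_one (n + j) with hj | hj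
  · simp [hj, (Nat.even_iff.mpr hj).neg_one_pow]
  · simp [hj, (Nat.odd_iff.mpr hj).neg_one_pow]

end Polynomial

def ConvergesLinearlyFromAbove (g : ℝ → ℝ) (α : ℝ) : Prop :=
  ∃ δ > (0 : ℝ), ∃ ℓ : ℝ, 0 ≤ ℓ ∧ ℓ < 1 ∧
    ∀ x₀ : ℝ, α < x₀ → x₀ < α + δ →
      ∀ x : ℕ → ℝ, x 0 = x₀ → (∀ t : ℕ, x (t + 1) = g (x t)) →
        (∀ t : ℕ, 0 ≤ x (t + 1) - α ∧ x (t + 1) - α ≤ ℓ * (x t - α)) ∧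
          Tendsto x atTop (𝓝 α)

theorem le_and_sub_le_pow_mul_of_contracting {g : ℝ → ℝ} {α δ ℓ : ℝ} (hℓ0 : 0 ≤ ℓ)
    (hℓ1 : ℓ ≤ 1) (hg : ∀ y, α ≤ y → y < α + δ → α ≤ g y ∧ g y - α ≤ ℓ * (y - α))
    {x : ℕ → ℝ} (hx : ∀ t, x (t + 1) = g (x t)) (hα : α ≤ x 0) (hδ : x 0 < α + δ) (t : ℕ) :
    α ≤ x t ∧ x t - α ≤ ℓ ^ t * (x 0 - α) := by
  induction t with
  | zero => simpa using hα
  | succ t ih =>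
    have hwindow : x t < α + δ := by nlinarith [pow_le_one₀ hℓ0 hℓ1 (n := t)]
    obtain ⟨hge, hle⟩ := hg (x t) ih.1 hwindow
    rw [hx, pow_succ', mul_assoc]
    exact ⟨hge, hle.trans (mul_le_mul_of_nonneg_left ih.2 hℓ0)⟩

theorem convergesLinearlyFromAbove_of_sub_eq_mul {g ρ : ℝ → ℝ} {α : ℝ}
    (hstep : ∀ x, α ≤ x → g x - α = (x - α) * ρ x) (hρ0 : ∀ x, α ≤ x → 0 ≤ ρ x)
    (hρ : ContinuousAt ρ α) (hρ1 : ρ α < 1) : ConvergesLinearlyFromAbove g α := by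
  obtain ⟨ℓ, hρℓ, hℓ1⟩ := exists_between hρ1
  have hℓ0 : 0 ≤ ℓ := (hρ0 α le_rfl).trans hρℓ.le
  obtain ⟨δ, hδ, hball⟩ := Metric.mem_nhds_iff.mp (hρ (Iio_mem_nhds hρℓ))
  have hg : ∀ y, α ≤ y → y < α + δ → α ≤ g y ∧ g y - α ≤ ℓ * (y - α) := by
    intro y hαy hyδ
    have hρy : ρ y < ℓ :=
      hball (by rw [Metric.mem_ball, Real.dist_eq, abs_lt]; constructor <;> linarith)
    have := hstep y hαy
    constructor
    · nlinarith [hρ0 y hαy]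
    · nlinarith
  refine ⟨δ, hδ, ℓ, hℓ0, hℓ1, fun x₀ hx₀ hx₀δ x hx0 hx => ?_⟩
  subst hx0
  have horbit := le_and_sub_le_pow_mul_of_contracting hℓ0 hℓ1.le hg hx hx₀.le hx₀δ
  refine ⟨fun t => ?_, ?_⟩
  · have hwindow : x t < α + δ := by nlinarith [horbit t, pow_le_one₀ hℓ0 hℓ1.le (n := t)]
    obtain ⟨hge, hle⟩ := hg (x t) (horbit t).1 hwindow
    rw [hx]
    exact ⟨sub_nonneg.mpr hge, hle⟩
  · have hbound : Tendsto (fun t => α + ℓ ^ t * (x 0 - α)) atTop (𝓝 α) := by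
      simpa using
        ((tendsto_pow_atTop_nhds_zero_of_lt_one hℓ0 hℓ1).mul_const (x 0 - α)).const_add α
    exact tendsto_of_tendsto_of_tendsto_of_le_of_le tendsto_const_nhds hbound
      (fun t => (horbit t).1) (fun t => by linarith [(horbit t).2])

theorem convergesLinearlyFromAbove_of_cofactor {α : ℝ} (hα : 0 < α) {h : ℝ[X]} (hh : h.Monic)
    (hroots : ∀ z : ℂ, aeval z h = 0 → 0 ≤ z.re) (hhα : 0 < h.eval α) {p q : ℝ → ℝ}
    (hp : ∀ x, 2 * p x = (x - α) * h.eval x + (x + α) * ((-1) ^ h.natDegree * h.eval (-x)))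
    (hq : ∀ x, 2 * q x = (x + α) * ((-1) ^ h.natDegree * h.eval (-x)) - (x - α) * h.eval x) :
    ConvergesLinearlyFromAbove (fun x => x * q x / p x) α := by
  set H : ℝ → ℝ := fun x => (-1) ^ h.natDegree * h.eval (-x) with hH
  have hH_pos : ∀ x, 0 < x → 0 < H x := fun x hx =>
    hh.neg_one_pow_natDegree_mul_eval_neg_pos (fun _ hy => eval_ne_zero_of_neg hroots hy) hx
  have habs_le : ∀ x, 0 < x → |h.eval x| ≤ H x := fun x hx => by
    rw [← abs_of_pos (hH_pos x hx), hH, abs_mul, abs_pow, abs_neg, abs_one, one_pow, one_mul]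
    exact abs_eval_le_abs_eval_neg_s12 hroots hx.le
  have hp_pos : ∀ x, α ≤ x → 0 < 2 * p x := fun x hx => by
    rw [hp]
    nlinarith [neg_abs_le (h.eval x), habs_le x (by linarith), hH_pos x (by linarith)]
  have hp_cont : Continuous p := by
    rw [show p = fun x => ((x - α) * h.eval x + (x + α) * H x) / 2 from
      funext fun x => by linarith [hp x]]
    fun_prop
  apply convergesLinearlyFromAbove_of_sub_eq_mul
    (ρ := fun x => (x + α) * (H x - h.eval x) / (2 * p x))
  · intro x hx
    have hpx : p x ≠ 0 := by linarith [hp_pos x hx]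
    field_simp
    linear_combination x * hq x - α * hp x
  · exact fun x hx => div_nonneg (mul_nonneg (by linarith)
      (by linarith [le_abs_self (h.eval x), habs_le x (by linarith)])) (hp_pos x hx).le
  · exact (by fun_prop : Continuous fun x => (x + α) * (H x - h.eval x)).continuousAt.div
      (continuous_const.mul hp_cont).continuousAt (hp_pos α le_rfl).ne'
  · show (α + α) * (H α - h.eval α) / (2 * p α) < 1
    rw [div_lt_one (hp_pos α le_rfl), hp α]
    nlinarith

theorem stmt12_general (f : Polynomial ℝ) (n : ℕ)
    (hmonic : f.Monic) (hdeg : f.natDegree = n)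
    (has1 : ∀ z : ℂ, (Polynomial.aeval z) f = 0 → 0 ≤ z.re)
    (p q : ℝ → ℝ)
    (hp : ∀ x : ℝ, p x =
      ∑ j ∈ Finset.range (n + 1), if (n + j) % 2 = 0 then f.coeff j * x ^ j else 0)
    (hq : ∀ x : ℝ, q x =
      ∑ j ∈ Finset.range (n + 1), if (n + j) % 2 = 1 then -(f.coeff j) * x ^ j else 0)
    (α : ℝ) (hα : 0 < α) (hroot : f.IsRoot α)
    (hderiv : 0 < (Polynomial.derivative f).eval α) :
    ∃ δ > (0 : ℝ), ∃ ℓ : ℝ, 0 ≤ ℓ ∧ ℓ < 1 ∧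
      ∀ x₀ : ℝ, α < x₀ → x₀ < α + δ →
        ∀ x : ℕ → ℝ, x 0 = x₀ →
          (∀ t : ℕ, x (t + 1) = x t * q (x t) / p (x t)) →
          (∀ t : ℕ, 0 ≤ x (t + 1) - α ∧ x (t + 1) - α ≤ ℓ * (x t - α)) ∧
            Tendsto x atTop (nhds α) := by
  obtain ⟨h, rfl⟩ := dvd_iff_isRoot.mpr hroot
  have hh : h.Monic := (monic_X_sub_C α).of_mul_monic_left hmonic
  obtain rfl : n = h.natDegree + 1 := by
    rw [← hdeg, (monic_X_sub_C α).natDegree_mul hh, natDegree_X_sub_C, add_comm]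
  have hsub (x : ℝ) : p x - q x = (x - α) * h.eval x := by
    rw [hp, hq, sum_even_sub_sum_odd_eq_eval hdeg.le, eval_mul, eval_sub, eval_X, eval_C]
  have hadd (x : ℝ) : p x + q x = (-1) ^ (h.natDegree + 1) * ((-x - α) * h.eval (-x)) := by
    rw [hp, hq, sum_even_add_sum_odd_eq_eval_neg hdeg.le, eval_mul, eval_sub, eval_X, eval_C]
  exact convergesLinearlyFromAbove_of_cofactor hα hh (fun z hz => has1 z (by simp [hz]))
    (by simpa using hderiv) (fun x => by linear_combination hsub x + hadd x)
    (fun x => by linear_combination hadd x - hsub x)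

/-- Let `f` be a monic real polynomial of degree `n ≥ 1` satisfying
Assumption 1, with even/odd splitting `f = p - q`, and let `α > 0` be a simple real root
of `f` with `f'(α) > 0`. Then there exist `δ > 0` and `ℓ ∈ [0, 1)` such that for every
`x₀` with `α < x₀ < α + δ`, the sequence `x (t+1) = x t * q (x t) / p (x t)` started at
`x₀` satisfies `0 ≤ x (t+1) - α ≤ ℓ * (x t - α)` for all `t`; in particular it converges
to `α` (at a linear rate). -/
theorem stmt12 (f : Polynomial ℝ) (n : ℕ) (hn : 1 ≤ n)
    (hmonic : f.Monic) (hdeg : f.natDegree = n)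
    (has1 : ∀ z : ℂ, (Polynomial.aeval z) f = 0 → 0 ≤ z.re)
    (has2 : ∃ z : ℂ, (Polynomial.aeval z) f = 0 ∧ 0 < z.re)
    (p q : ℝ → ℝ)
    (hp : ∀ x : ℝ, p x =
      ∑ j ∈ Finset.range (n + 1), if (n + j) % 2 = 0 then f.coeff j * x ^ j else 0)
    (hq : ∀ x : ℝ, q x =
      ∑ j ∈ Finset.range (n + 1), if (n + j) % 2 = 1 then -(f.coeff j) * x ^ j else 0)
    (α : ℝ) (hα : 0 < α) (hroot : f.IsRoot α)
    (hderiv : 0 < (Polynomial.derivative f).eval α) :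
    ∃ δ > (0 : ℝ), ∃ ℓ : ℝ, 0 ≤ ℓ ∧ ℓ < 1 ∧
      ∀ x₀ : ℝ, α < x₀ → x₀ < α + δ →
        ∀ x : ℕ → ℝ, x 0 = x₀ →
          (∀ t : ℕ, x (t + 1) = x t * q (x t) / p (x t)) →
          (∀ t : ℕ, 0 ≤ x (t + 1) - α ∧ x (t + 1) - α ≤ ℓ * (x t - α)) ∧
            Tendsto x atTop (nhds α) :=
  stmt12_general f n hmonic hdeg has1 p q hp hq α hα hroot hderiv
end
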